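/- arXiv:1612.05685 — 13 statements merged into one kernel-verified Lean document; each statement's English description precedes it below -/
import Mathlib

section
/- Let f be convex on [m, M] and differentiable on an open interval containing [m, M], and suppose E[X] ∈ (m, M). Then 0 ≤ E[f(X)] − f(E[X]) ≤ ((M − E[X])(E[X] − m)/(M − m)) · sup_{t ∈ (m,M)} Θ_f(t; m, M); moreover this quantity is ≤ (1/4)(M − m) · sup_{t ∈ (m,M)} Θ_f(t; m, M) and also ≤ (M − E[X])(E[X] − m)(f′(M) − f′(m))/(M − m), and each of these is ≤ (1/4)(M − m)(f′(M) − f′(m)). -/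
/-!
Jensen's inequality gives the lower bound. For the upper bound, convexity puts the graph of `f`
on `[m, M]` below its chord, so `E[f(X)]` is at most the chord evaluated at `E[X]`; the gap
between the chord and `f` at `t` is exactly `(M - t)(t - m)/(M - m) · Θ_f(t)`. Finally `Θ_f(t)`
is bounded by `f'(M) - f'(m)` because secant slopes of a convex function lie between the
derivatives at `m` and `M`, and `(M - t)(t - m) ≤ (M - m)² / 4` by AM-GM.
-/

open MeasureTheory Real Set

/-- The quantity `Θ_f(t; m, M)`. -/
noncomputable def slopeGap (f : ℝ → ℝ) (m M t : ℝ) : ℝ :=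
  (f M - f t) / (M - t) - (f t - f m) / (t - m)

section Chord

variable {f : ℝ → ℝ} {m M : ℝ}

theorem ConvexOn.le_chord (hf : ConvexOn ℝ (Icc m M) f) {x : ℝ} (hx : x ∈ Icc m M) :
    f x ≤ f m + slope f m M * (x - m) := by
  rcases hx.1.eq_or_lt with rfl | hmx
  · simp
  have hsecant : (f x - f m) / (x - m) ≤ (f M - f m) / (M - m) :=
    hf.secant_mono (left_mem_Icc.2 (hmx.le.trans hx.2)) hx (right_mem_Icc.2 (hmx.le.trans hx.2))
      hmx.ne' (hmx.trans_le hx.2).ne' hx.2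
  rw [div_le_iff₀ (sub_pos.2 hmx), ← slope_def_field] at hsecant
  linarith

theorem chord_sub_eq_mul_slopeGap {t : ℝ} (hmt : m ≠ t) (htM : t ≠ M) (hmM : m ≠ M) :
    f m + slope f m M * (t - m) - f t = (M - t) * (t - m) / (M - m) * slopeGap f m M t := by
  have := sub_ne_zero.2 hmt
  have := sub_ne_zero.2 htM
  have := sub_ne_zero.2 hmM
  rw [slope_def_field, slopeGap]
  field_simp
  ring

theorem ConvexOn.slopeGap_nonneg (hf : ConvexOn ℝ (Icc m M) f) {t : ℝ} (ht : t ∈ Ioo m M) :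
    0 ≤ slopeGap f m M t :=
  sub_nonneg.2 <| hf.slope_mono_adjacent (left_mem_Icc.2 (ht.1.trans ht.2).le)
    (right_mem_Icc.2 (ht.1.trans ht.2).le) ht.1 ht.2

theorem ConvexOn.slopeGap_le_deriv_sub_deriv (hf : ConvexOn ℝ (Icc m M) f)
    (hfm : DifferentiableAt ℝ f m) (hfM : DifferentiableAt ℝ f M) {t : ℝ} (ht : t ∈ Ioo m M) :
    slopeGap f m M t ≤ deriv f M - deriv f m := by
  have hm : m ∈ Icc m M := left_mem_Icc.2 (ht.1.trans ht.2).le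
  have hM : M ∈ Icc m M := right_mem_Icc.2 (ht.1.trans ht.2).le
  have hleft := hf.deriv_le_slope hm (Ioo_subset_Icc_self ht) ht.1 hfm
  have hright := hf.slope_le_deriv (Ioo_subset_Icc_self ht) hM ht.2 hfM
  rw [slope_def_field] at hleft hright
  rw [slopeGap]
  linarith

theorem ConvexOn.sSup_slopeGap_le_deriv_sub_deriv (hf : ConvexOn ℝ (Icc m M) f) (hmM : m < M)
    (hfm : DifferentiableAt ℝ f m) (hfM : DifferentiableAt ℝ f M) :
    sSup (slopeGap f m M '' Ioo m M) ≤ deriv f M - deriv f m :=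
  csSup_le ((nonempty_Ioo.2 hmM).image _) <| forall_mem_image.2 fun _ ht ↦
    hf.slopeGap_le_deriv_sub_deriv hfm hfM ht

theorem ConvexOn.slopeGap_le_sSup (hf : ConvexOn ℝ (Icc m M) f)
    (hfm : DifferentiableAt ℝ f m) (hfM : DifferentiableAt ℝ f M) {t : ℝ} (ht : t ∈ Ioo m M) :
    slopeGap f m M t ≤ sSup (slopeGap f m M '' Ioo m M) :=
  le_csSup ⟨_, forall_mem_image.2 fun _ hs ↦ hf.slopeGap_le_deriv_sub_deriv hfm hfM hs⟩
    (mem_image_of_mem _ ht)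

end Chord

/-- The Edmundson–Madansky bound. -/
theorem ConvexOn.integral_comp_le_chord {Ω : Type*} [MeasurableSpace Ω] {P : Measure Ω}
    [IsProbabilityMeasure P] {X : Ω → ℝ} {f : ℝ → ℝ} {m M : ℝ} (hf : ConvexOn ℝ (Icc m M) f)
    (hX : ∀ᵐ ω ∂P, X ω ∈ Icc m M) (hXint : Integrable X P)
    (hfXint : Integrable (fun ω ↦ f (X ω)) P) :
    ∫ ω, f (X ω) ∂P ≤ f m + slope f m M * ((∫ ω, X ω ∂P) - m) := by
  have hlinear_int : Integrable (fun ω ↦ slope f m M * (X ω - m)) P :=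
    (hXint.sub (integrable_const m)).const_mul _
  calc ∫ ω, f (X ω) ∂P ≤ ∫ ω, f m + slope f m M * (X ω - m) ∂P :=
        integral_mono_ae hfXint ((integrable_const _).add hlinear_int)
          (hX.mono fun _ ↦ hf.le_chord)
    _ = f m + slope f m M * ((∫ ω, X ω ∂P) - m) := by
        rw [integral_add (integrable_const _) hlinear_int, integral_const_mul,
          integral_sub hXint (integrable_const m)]
        simp

theorem sub_mul_sub_div_le_quarter {m M t : ℝ} (hmM : m < M) :
    (M - t) * (t - m) / (M - m) ≤ 1 / 4 * (M - m) := by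
  rw [div_le_iff₀ (sub_pos.2 hmM)]
  nlinarith [four_mul_le_sq_add (M - t) (t - m)]

theorem stmt_0 {Ω : Type*} [MeasurableSpace Ω] (P : Measure Ω) [IsProbabilityMeasure P]
    (X : Ω → ℝ) (m M : ℝ) (hmM : m < M)
    (hX : ∀ᵐ ω ∂P, X ω ∈ Set.Icc m M)
    (hXint : Integrable X P)
    (f : ℝ → ℝ) (a b : ℝ) (ham : a < m) (hMb : M < b)
    (hconv : ConvexOn ℝ (Set.Icc m M) f)
    (hdiff : ∀ x ∈ Set.Ioo a b, DifferentiableAt ℝ f x)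
    (hfXint : Integrable (fun ω => f (X ω)) P)
    (hmean : (∫ ω, X ω ∂P) ∈ Set.Ioo m M) :
    let μ := ∫ ω, X ω ∂P
    let S := sSup ((fun t => (f M - f t) / (M - t) - (f t - f m) / (t - m)) '' Set.Ioo m M)
    0 ≤ (∫ ω, f (X ω) ∂P) - f μ ∧
    (∫ ω, f (X ω) ∂P) - f μ ≤ (M - μ) * (μ - m) / (M - m) * S ∧
    (M - μ) * (μ - m) / (M - m) * S ≤ (1 / 4) * (M - m) * S ∧
    (M - μ) * (μ - m) / (M - m) * S ≤
      (M - μ) * (μ - m) * (deriv f M - deriv f m) / (M - m) ∧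
    (1 / 4) * (M - m) * S ≤ (1 / 4) * (M - m) * (deriv f M - deriv f m) ∧
    (M - μ) * (μ - m) * (deriv f M - deriv f m) / (M - m) ≤
      (1 / 4) * (M - m) * (deriv f M - deriv f m) := by
  intro μ S
  have hdiffIcc : ∀ x ∈ Icc m M, DifferentiableAt ℝ f x :=
    fun x hx ↦ hdiff x (Icc_subset_Ioo ham hMb hx)
  have hfm := hdiffIcc m (left_mem_Icc.2 hmM.le)
  have hfM := hdiffIcc M (right_mem_Icc.2 hmM.le)
  have hjensen : f μ ≤ ∫ ω, f (X ω) ∂P := hconv.map_integral_le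
    (fun x hx ↦ (hdiffIcc x hx).continuousAt.continuousWithinAt) isClosed_Icc hX hXint hfXint
  have hgap_le_S : slopeGap f m M μ ≤ S := hconv.slopeGap_le_sSup hfm hfM hmean
  have hS_nonneg : 0 ≤ S := (hconv.slopeGap_nonneg hmean).trans hgap_le_S
  have hS_le : S ≤ deriv f M - deriv f m := hconv.sSup_slopeGap_le_deriv_sub_deriv hmM hfm hfM
  have hweight : 0 ≤ (M - μ) * (μ - m) / (M - m) :=
    div_nonneg (mul_nonneg (sub_nonneg.2 hmean.2.le) (sub_nonneg.2 hmean.1.le)) (by linarith)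
  have hquarter := sub_mul_sub_div_le_quarter (t := μ) hmM
  refine ⟨sub_nonneg.2 hjensen, ?_, by gcongr, ?_, by gcongr, ?_⟩
  · calc (∫ ω, f (X ω) ∂P) - f μ ≤ f m + slope f m M * (μ - m) - f μ := by
          linarith [hconv.integral_comp_le_chord hX hXint hfXint]
      _ = (M - μ) * (μ - m) / (M - m) * slopeGap f m M μ :=
          chord_sub_eq_mul_slopeGap hmean.1.ne hmean.2.ne hmM.ne
      _ ≤ (M - μ) * (μ - m) / (M - m) * S := by gcongr
  · rw [mul_div_right_comm _ (deriv f M - deriv f m)]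
    exact mul_le_mul_of_nonneg_left hS_le hweight
  · rw [mul_div_right_comm]
    exact mul_le_mul_of_nonneg_right hquarter (hS_nonneg.trans hS_le)
end

section
/- Let f be convex on [m, M] and differentiable on an open interval containing [m, M], and suppose E[X] ∈ (m, M). Then 0 ≤ E[f(X)] − f(E[X]) ≤ (1/4)(M − m) Θ_f(E[X]; m, M) ≤ (1/4)(M − m) · sup_{t ∈ (m,M)} Θ_f(t; m, M) ≤ (1/4)(M − m)(f′(M) − f′(m)). -/
/-!
Jensen's inequality gives the lower bound. For the upper bound, convexity puts the graph of `f`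
on `[m, M]` below the chord through `(m, f m)` and `(M, f M)`; taking expectations bounds
`E[f(X)]` by the value of the chord at `μ = E[X]`. The gap between the chord and `f` at `μ` is
`(μ - m)(M - μ)/(M - m) · Θ_f(μ)`, and `(μ - m)(M - μ) ≤ (M - m)² / 4`. Finally `Θ_f(t)` is a
difference of two secant slopes, which convexity squeezes between `0` and `f'(M) - f'(m)`.
-/

open MeasureTheory Set

theorem chord_sub_eq_mul_slope_sub_slope {𝕜 : Type*} [Field 𝕜] (f : 𝕜 → 𝕜) {m t M : 𝕜}
    (hmt : m ≠ t) (htM : t ≠ M) :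
    (M - t) * f m + (t - m) * f M - (M - m) * f t
      = (t - m) * (M - t) * (slope f t M - slope f m t) := by
  rw [slope_def_field, slope_def_field]
  have h₁ : t - m ≠ 0 := sub_ne_zero.2 hmt.symm
  have h₂ : M - t ≠ 0 := sub_ne_zero.2 htM.symm
  field_simp
  ring

namespace ConvexOn

variable {f : ℝ → ℝ} {m M : ℝ}

theorem mul_le_chord (hf : ConvexOn ℝ (Icc m M) f) {x : ℝ} (hx : x ∈ Icc m M) :
    (M - m) * f x ≤ (M - x) * f m + (x - m) * f M := by
  rcases hx.1.eq_or_lt with rfl | hmx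
  · exact le_of_eq (by ring)
  rcases hx.2.eq_or_lt with rfl | hxM
  · exact le_of_eq (by ring)
  exact hf.secant_mono_aux1 (left_mem_Icc.2 (hmx.trans hxM).le)
    (right_mem_Icc.2 (hmx.trans hxM).le) hmx hxM

/-- Lah–Ribarič inequality. -/
theorem mul_integral_comp_le_chord {Ω : Type*} [MeasurableSpace Ω] {P : Measure Ω}
    [IsProbabilityMeasure P] {X : Ω → ℝ} (hf : ConvexOn ℝ (Icc m M) f)
    (hX : ∀ᵐ ω ∂P, X ω ∈ Icc m M) (hXint : Integrable X P)
    (hfXint : Integrable (fun ω => f (X ω)) P) :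
    (M - m) * ∫ ω, f (X ω) ∂P ≤ (M - ∫ ω, X ω ∂P) * f m + ((∫ ω, X ω ∂P) - m) * f M := by
  have hleft : Integrable (fun ω => (M - X ω) * f m) P :=
    ((integrable_const M).sub hXint).mul_const (f m)
  have hright : Integrable (fun ω => (X ω - m) * f M) P :=
    (hXint.sub (integrable_const m)).mul_const (f M)
  calc (M - m) * ∫ ω, f (X ω) ∂P = ∫ ω, (M - m) * f (X ω) ∂P := (integral_const_mul _ _).symm
    _ ≤ ∫ ω, (M - X ω) * f m + (X ω - m) * f M ∂P :=
      integral_mono_ae (hfXint.const_mul _) (hleft.add hright)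
        (hX.mono fun ω hω => hf.mul_le_chord hω)
    _ = (M - ∫ ω, X ω ∂P) * f m + ((∫ ω, X ω ∂P) - m) * f M := by
      rw [integral_add hleft hright, integral_mul_const, integral_mul_const,
        integral_sub (integrable_const M) hXint, integral_sub hXint (integrable_const m)]
      simp

theorem slope_sub_slope_le_deriv_sub_deriv (hf : ConvexOn ℝ (Icc m M) f)
    (hm : DifferentiableAt ℝ f m) (hM : DifferentiableAt ℝ f M) {t : ℝ} (ht : t ∈ Ioo m M) :
    slope f t M - slope f m t ≤ deriv f M - deriv f m := by
  have hmM : m ≤ M := (ht.1.trans ht.2).le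
  have htM : slope f t M ≤ deriv f M :=
    hf.slope_le_deriv (Ioo_subset_Icc_self ht) (right_mem_Icc.2 hmM) ht.2 hM
  have hmt : deriv f m ≤ slope f m t :=
    hf.deriv_le_slope (left_mem_Icc.2 hmM) (Ioo_subset_Icc_self ht) ht.1 hm
  linarith

end ConvexOn

theorem stmt_1 {Ω : Type*} [MeasurableSpace Ω] (P : Measure Ω) [IsProbabilityMeasure P]
    (X : Ω → ℝ) (m M : ℝ) (hmM : m < M)
    (hX : ∀ᵐ ω ∂P, X ω ∈ Set.Icc m M)
    (hXint : Integrable X P)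
    (f : ℝ → ℝ) (a b : ℝ) (ham : a < m) (hMb : M < b)
    (hconv : ConvexOn ℝ (Set.Icc m M) f)
    (hdiff : ∀ x ∈ Set.Ioo a b, DifferentiableAt ℝ f x)
    (hfXint : Integrable (fun ω => f (X ω)) P)
    (hmean : (∫ ω, X ω ∂P) ∈ Set.Ioo m M) :
    let μ := ∫ ω, X ω ∂P
    let Θ : ℝ → ℝ := fun t => (f M - f t) / (M - t) - (f t - f m) / (t - m)
    let S := sSup (Θ '' Set.Ioo m M)
    0 ≤ (∫ ω, f (X ω) ∂P) - f μ ∧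
    (∫ ω, f (X ω) ∂P) - f μ ≤ (1 / 4) * (M - m) * Θ μ ∧
    (1 / 4) * (M - m) * Θ μ ≤ (1 / 4) * (M - m) * S ∧
    (1 / 4) * (M - m) * S ≤ (1 / 4) * (M - m) * (deriv f M - deriv f m) := by
  intro μ Θ S
  have hΘ (t : ℝ) : Θ t = slope f t M - slope f m t := by simp only [Θ, slope_def_field]
  have hm : m ∈ Icc m M := left_mem_Icc.2 hmM.le
  have hM : M ∈ Icc m M := right_mem_Icc.2 hmM.le
  have hdiffIcc (x : ℝ) (hx : x ∈ Icc m M) : DifferentiableAt ℝ f x :=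
    hdiff x ⟨ham.trans_le hx.1, hx.2.trans_lt hMb⟩
  have hΘ_le (t : ℝ) (ht : t ∈ Ioo m M) : Θ t ≤ deriv f M - deriv f m :=
    (hΘ t).trans_le <|
      hconv.slope_sub_slope_le_deriv_sub_deriv (hdiffIcc m hm) (hdiffIcc M hM) ht
  have hΘμ_nonneg : 0 ≤ Θ μ := sub_nonneg.2 (hconv.slope_mono_adjacent hm hM hmean.1 hmean.2)
  have hjensen : f μ ≤ ∫ ω, f (X ω) ∂P :=
    hconv.map_integral_le (fun x hx => (hdiffIcc x hx).continuousAt.continuousWithinAt)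
      isClosed_Icc hX hXint hfXint
  have hchord := hconv.mul_integral_comp_le_chord hX hXint hfXint
  have hgap := chord_sub_eq_mul_slope_sub_slope f hmean.1.ne hmean.2.ne
  have hamgm : (μ - m) * (M - μ) * Θ μ ≤ (M - m) ^ 2 / 4 * Θ μ := by
    refine mul_le_mul_of_nonneg_right ?_ hΘμ_nonneg
    linarith [four_mul_le_sq_add (μ - m) (M - μ)]
  have hquarter : 0 ≤ 1 / 4 * (M - m) := by linarith
  have hbdd : BddAbove (Θ '' Ioo m M) := ⟨_, forall_mem_image.2 hΘ_le⟩
  refine ⟨sub_nonneg.2 hjensen, ?_,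
    mul_le_mul_of_nonneg_left (le_csSup hbdd (mem_image_of_mem Θ hmean)) hquarter,
    mul_le_mul_of_nonneg_left (csSup_le ((nonempty_Ioo.2 hmM).image Θ) (forall_mem_image.2 hΘ_le))
      hquarter⟩
  rw [← hΘ] at hgap
  refine le_of_mul_le_mul_left ?_ (sub_pos.2 hmM)
  linarith
end

section
/- Let f be convex and continuous on [m, M]. Then 0 ≤ E[f(X)] − f(E[X]) ≤ (1 + 2|E[X] − (m + M)/2|/(M − m)) · [(f(m) + f(M))/2 − f((m + M)/2)] ≤ f(m) + f(M) − 2 f((m + M)/2). -/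
/-!
Every point of the graph of a convex `f` on `[m, M]` lies below the chord through `(m, f m)` and
`(M, f M)`, so integrating gives `E[f(X)] ≤ ℓ(E[X])`, where `ℓ` is that chord. It remains to bound
the deterministic gap `ℓ(μ) - f(μ)` at `μ = E[X]`: if `μ` lies to the right of the midpoint `c`,
then `c` lies between `m` and `μ`, and convexity on `[m, μ]` compares `f c` with `f m` and `f μ`;
rearranged, this is exactly `ℓ(μ) - f(μ) ≤ (1 + 2|μ - c|/(M - m)) (ℓ(c) - f(c))` (the other case is
symmetric). The lower bound is Jensen's inequality.
-/

open MeasureTheory Set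

section ThreePoint

variable {𝕜 : Type*} [Field 𝕜] [LinearOrder 𝕜] [IsStrictOrderedRing 𝕜] {s : Set 𝕜} {f : 𝕜 → 𝕜}

theorem ConvexOn.sub_mul_le_of_le_of_le (hf : ConvexOn 𝕜 s f) {x y z : 𝕜} (hx : x ∈ s)
    (hz : z ∈ s) (hxy : x ≤ y) (hyz : y ≤ z) :
    (z - x) * f y ≤ (z - y) * f x + (y - x) * f z := by
  rcases hxy.eq_or_lt with rfl | hxy
  · simp
  rcases hyz.eq_or_lt with rfl | hyz
  · simp
  exact hf.secant_mono_aux1 hx hz hxy hyz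

theorem ConvexOn.map_add_div_two_le {a b : 𝕜} (hf : ConvexOn 𝕜 (Icc a b) f) (hab : a < b) :
    f ((a + b) / 2) ≤ (f a + f b) / 2 := by
  have h := hf.sub_mul_le_of_le_of_le (left_mem_Icc.2 hab.le) (right_mem_Icc.2 hab.le)
    (by linarith : a ≤ (a + b) / 2) (by linarith : (a + b) / 2 ≤ b)
  nlinarith

theorem ConvexOn.chord_sub_le {a b x : 𝕜} (hf : ConvexOn 𝕜 (Icc a b) f) (hx : x ∈ Icc a b) :
    (b - x) * f a + (x - a) * f b - (b - a) * f x ≤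
      (b - a + 2 * |x - (a + b) / 2|) * ((f a + f b) / 2 - f ((a + b) / 2)) := by
  have hab : a ≤ b := hx.1.trans hx.2
  rcases le_total ((a + b) / 2) x with hcx | hxc
  · have h := hf.sub_mul_le_of_le_of_le (left_mem_Icc.2 hab) hx
      (by linarith : a ≤ (a + b) / 2) hcx
    rw [abs_of_nonneg (sub_nonneg.2 hcx)]
    linear_combination 2 * h
  · have h := hf.sub_mul_le_of_le_of_le hx (right_mem_Icc.2 hab) hxc
      (by linarith : (a + b) / 2 ≤ b)
    rw [abs_of_nonpos (sub_nonpos.2 hxc)]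
    linear_combination 2 * h

end ThreePoint

theorem ConvexOn.mul_integral_comp_le_chord_s2 {Ω : Type*} [MeasurableSpace Ω] {P : Measure Ω}
    [IsProbabilityMeasure P] {X : Ω → ℝ} {f : ℝ → ℝ} {a b : ℝ} (hf : ConvexOn ℝ (Icc a b) f)
    (hX : ∀ᵐ ω ∂P, X ω ∈ Icc a b) (hXint : Integrable X P)
    (hfXint : Integrable (fun ω => f (X ω)) P) :
    (b - a) * ∫ ω, f (X ω) ∂P ≤ (b - ∫ ω, X ω ∂P) * f a + ((∫ ω, X ω ∂P) - a) * f b := by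
  have hchord : ∀ᵐ ω ∂P, (b - a) * f (X ω) ≤ (b * f a - a * f b) + (f b - f a) * X ω := by
    filter_upwards [hX] with ω hω
    have h := hf.sub_mul_le_of_le_of_le (left_mem_Icc.2 (hω.1.trans hω.2))
      (right_mem_Icc.2 (hω.1.trans hω.2)) hω.1 hω.2
    linarith
  have h := integral_mono_ae (hfXint.const_mul (b - a))
    ((integrable_const _).add (hXint.const_mul (f b - f a))) hchord
  simp only [Pi.add_apply] at h
  rw [integral_const_mul, integral_add (integrable_const _) (hXint.const_mul _),
    integral_const_mul, integral_const, probReal_univ, one_smul] at h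
  linarith

theorem stmt_2 {Ω : Type*} [MeasurableSpace Ω] (P : Measure Ω) [IsProbabilityMeasure P]
    (X : Ω → ℝ) (m M : ℝ) (hmM : m < M)
    (hX : ∀ᵐ ω ∂P, X ω ∈ Set.Icc m M)
    (hXint : Integrable X P)
    (f : ℝ → ℝ)
    (hconv : ConvexOn ℝ (Set.Icc m M) f)
    (hcont : ContinuousOn f (Set.Icc m M))
    (hfXint : Integrable (fun ω => f (X ω)) P) :
    let μ := ∫ ω, X ω ∂P
    0 ≤ (∫ ω, f (X ω) ∂P) - f μ ∧
    (∫ ω, f (X ω) ∂P) - f μ ≤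
      (1 + 2 * |μ - (m + M) / 2| / (M - m)) * ((f m + f M) / 2 - f ((m + M) / 2)) ∧
    (1 + 2 * |μ - (m + M) / 2| / (M - m)) * ((f m + f M) / 2 - f ((m + M) / 2)) ≤
      f m + f M - 2 * f ((m + M) / 2) := by
  intro μ
  have hMm : 0 < M - m := sub_pos.2 hmM
  have hμ : μ ∈ Icc m M := (convex_Icc m M).integral_mem isClosed_Icc hX hXint
  have hjensen := hconv.map_integral_le hcont isClosed_Icc hX hXint hfXint
  have hchord := hconv.mul_integral_comp_le_chord_s2 hX hXint hfXint
  have hgap := hconv.chord_sub_le hμ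
  have hmid := hconv.map_add_div_two_le hmM
  have hdist : |μ - (m + M) / 2| ≤ (M - m) / 2 :=
    abs_le.2 ⟨by linarith [hμ.1], by linarith [hμ.2]⟩
  have hfactor : 1 + 2 * |μ - (m + M) / 2| / (M - m) =
      (M - m + 2 * |μ - (m + M) / 2|) / (M - m) := by
    field_simp
  refine ⟨sub_nonneg.2 hjensen, ?_, ?_⟩
  · rw [hfactor, div_mul_eq_mul_div, le_div_iff₀ hMm]
    linarith
  · have hfactor_le : 1 + 2 * |μ - (m + M) / 2| / (M - m) ≤ 2 := by
      rw [hfactor, div_le_iff₀ hMm]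
      linarith
    calc (1 + 2 * |μ - (m + M) / 2| / (M - m)) * ((f m + f M) / 2 - f ((m + M) / 2))
        ≤ 2 * ((f m + f M) / 2 - f ((m + M) / 2)) :=
          mul_le_mul_of_nonneg_right hfactor_le (by linarith)
      _ = f m + f M - 2 * f ((m + M) / 2) := by ring
end

section
/- Let Φ : C → ℝ be a convex function on a convex subset C of a real vector space, let x, y ∈ C and t ∈ [0, 1]. Then 2·min{t, 1 − t}·[(Φ(x) + Φ(y))/2 − Φ((x + y)/2)] ≤ t·Φ(x) + (1 − t)·Φ(y) − Φ(t·x + (1 − t)·y) ≤ 2·max{t, 1 − t}·[(Φ(x) + Φ(y))/2 − Φ((x + y)/2)]. -/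
/-!
Along the segment, the Jensen gap `J(t) = t Φ(x) + (1 - t) Φ(y) - Φ(t x + (1 - t) y)` is a
concave function of `t ∈ [0, 1]` vanishing at both endpoints. For `t ≤ 1/2`, concavity on the
chord from `0` to `1/2` gives `J(t) ≥ 2t J(1/2)`, and on the chord from `t` to `1` (which passes
through `1/2`) gives `J(1/2) ≥ J(t) / (2(1 - t))`. The case `t ≥ 1/2` follows by exchanging `x`
and `y`.
-/

open Set

lemma ConcaveOn.two_mul_le_and_le_of_le_half {g : ℝ → ℝ} (hg : ConcaveOn ℝ (Icc 0 1) g)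
    (hg0 : g 0 = 0) (hg1 : g 1 = 0) {t : ℝ} (ht0 : 0 ≤ t) (ht : t ≤ 1 / 2) :
    2 * t * g (1 / 2) ≤ g t ∧ g t ≤ 2 * (1 - t) * g (1 / 2) := by
  have hzero : (0 : ℝ) ∈ Icc 0 1 := by norm_num
  have hhalf : (1 / 2 : ℝ) ∈ Icc 0 1 := by norm_num
  have hone : (1 : ℝ) ∈ Icc 0 1 := by norm_num
  constructor
  · calc 2 * t * g (1 / 2) = (2 * t) • g (1 / 2) + (1 - 2 * t) • g 0 := by simp [hg0]
      _ ≤ g ((2 * t) • (1 / 2) + (1 - 2 * t) • 0) :=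
        hg.2 hhalf hzero (by linarith) (by linarith) (by ring)
      _ = g t := by congr 1; simp only [smul_eq_mul]; ring
  · have h1t : 0 < 1 - t := by linarith
    set s := 1 / (2 * (1 - t)) with hs
    have hs1 : s ≤ 1 := by rw [hs, div_le_one (by linarith)]; linarith
    have hchord : s * g t ≤ g (1 / 2) :=
      calc s * g t = s • g t + (1 - s) • g 1 := by simp [hg1]
        _ ≤ g (s • t + (1 - s) • 1) :=
          hg.2 ⟨ht0, by linarith⟩ hone (by positivity) (by linarith) (by ring)
        _ = g (1 / 2) := by congr 1; simp only [hs, smul_eq_mul]; field_simp; ring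
    calc g t = 2 * (1 - t) * (s * g t) := by rw [hs]; field_simp
      _ ≤ 2 * (1 - t) * g (1 / 2) := by gcongr

section JensenGap

variable {V : Type*} [AddCommGroup V] [Module ℝ V]

def jensenGap (Φ : V → ℝ) (x y : V) (t : ℝ) : ℝ :=
  t * Φ x + (1 - t) * Φ y - Φ (t • x + (1 - t) • y)

variable {Φ : V → ℝ} {x y : V}

@[simp] lemma jensenGap_zero : jensenGap Φ x y 0 = 0 := by simp [jensenGap]

@[simp] lemma jensenGap_one : jensenGap Φ x y 1 = 0 := by simp [jensenGap]

lemma jensenGap_half :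
    jensenGap Φ x y (1 / 2) = (Φ x + Φ y) / 2 - Φ ((1 / 2 : ℝ) • (x + y)) := by
  rw [jensenGap, smul_add]; ring_nf

lemma jensenGap_half_comm : jensenGap Φ y x (1 / 2) = jensenGap Φ x y (1 / 2) := by
  rw [jensenGap_half, jensenGap_half, add_comm (Φ y), add_comm y]

lemma jensenGap_one_sub_comm (t : ℝ) : jensenGap Φ y x (1 - t) = jensenGap Φ x y t := by
  rw [jensenGap, jensenGap, sub_sub_cancel, add_comm (t • x)]; ring

lemma ConvexOn.concaveOn_jensenGap {C : Set V} (hΦ : ConvexOn ℝ C Φ) (hx : x ∈ C)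
    (hy : y ∈ C) : ConcaveOn ℝ (Icc 0 1) (jensenGap Φ x y) := by
  refine ⟨convex_Icc 0 1, fun a ha b hb wa wb hwa hwb hab ↦ ?_⟩
  have hmem : ∀ s ∈ Icc (0 : ℝ) 1, s • x + (1 - s) • y ∈ C := fun s hs ↦
    hΦ.1 hx hy hs.1 (sub_nonneg.2 hs.2) (add_sub_cancel _ _)
  have hpt : wa • (a • x + (1 - a) • y) + wb • (b • x + (1 - b) • y) =
      (wa * a + wb * b) • x + (1 - (wa * a + wb * b)) • y := by
    obtain rfl : wb = 1 - wa := by linarith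
    module
  have hjensen := hΦ.2 (hmem a ha) (hmem b hb) hwa hwb hab
  rw [hpt] at hjensen
  simp only [jensenGap, smul_eq_mul]
  linear_combination hjensen + Φ y * hab

lemma ConvexOn.jensenGap_bounds {C : Set V} (hΦ : ConvexOn ℝ C Φ) (hx : x ∈ C) (hy : y ∈ C)
    {t : ℝ} (ht : t ∈ Icc (0 : ℝ) 1) :
    2 * min t (1 - t) * jensenGap Φ x y (1 / 2) ≤ jensenGap Φ x y t ∧
      jensenGap Φ x y t ≤ 2 * max t (1 - t) * jensenGap Φ x y (1 / 2) := by
  rcases le_total t (1 / 2) with h | h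
  · rw [min_eq_left (by linarith), max_eq_right (by linarith)]
    exact (hΦ.concaveOn_jensenGap hx hy).two_mul_le_and_le_of_le_half jensenGap_zero
      jensenGap_one ht.1 h
  · rw [min_eq_right (by linarith), max_eq_left (by linarith), ← jensenGap_one_sub_comm t,
      ← jensenGap_half_comm]
    have := (hΦ.concaveOn_jensenGap hy hx).two_mul_le_and_le_of_le_half jensenGap_zero
      jensenGap_one (sub_nonneg.2 ht.2) (by linarith : 1 - t ≤ 1 / 2)
    rwa [sub_sub_cancel] at this

end JensenGap

theorem stmt_4_general {V : Type*} [AddCommGroup V] [Module ℝ V]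
    (C : Set V) (Φ : V → ℝ) (hΦ : ConvexOn ℝ C Φ)
    (x y : V) (hx : x ∈ C) (hy : y ∈ C) (t : ℝ) (ht : t ∈ Set.Icc (0 : ℝ) 1) :
    2 * min t (1 - t) * ((Φ x + Φ y) / 2 - Φ (((1 : ℝ) / 2) • (x + y))) ≤
      t * Φ x + (1 - t) * Φ y - Φ (t • x + (1 - t) • y) ∧
    t * Φ x + (1 - t) * Φ y - Φ (t • x + (1 - t) • y) ≤
      2 * max t (1 - t) * ((Φ x + Φ y) / 2 - Φ (((1 : ℝ) / 2) • (x + y))) := by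
  rw [← jensenGap_half]
  exact hΦ.jensenGap_bounds hx hy ht

theorem stmt_4 {V : Type*} [AddCommGroup V] [Module ℝ V]
    (C : Set V) (hC : Convex ℝ C) (Φ : V → ℝ) (hΦ : ConvexOn ℝ C Φ)
    (x y : V) (hx : x ∈ C) (hy : y ∈ C) (t : ℝ) (ht : t ∈ Set.Icc (0 : ℝ) 1) :
    2 * min t (1 - t) * ((Φ x + Φ y) / 2 - Φ (((1 : ℝ) / 2) • (x + y))) ≤
      t * Φ x + (1 - t) * Φ y - Φ (t • x + (1 - t) • y) ∧
    t * Φ x + (1 - t) * Φ y - Φ (t • x + (1 - t) • y) ≤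
      2 * max t (1 - t) * ((Φ x + Φ y) / 2 - Φ (((1 : ℝ) / 2) • (x + y))) :=
  stmt_4_general C Φ hΦ x y hx hy t ht
end

section
/- Let f be twice differentiable on an open interval containing [m, M] with k ≤ f″(z) ≤ K for all z ∈ [m, M], where K > k ≥ 0. Then for every t ∈ [m, M]: (K/2)·E[(X − t)²] ≥ E[X·f′(X)] − t·E[f′(X)] + f(t) − E[f(X)] ≥ (k/2)·E[(X − t)²]. -/
/-!
Write `R(x, t) = f t - f x - f'(x) (t - x)` for the remainder of the tangent line of `f` at `x`.
Since `f - k z² / 2` and `K z² / 2 - f` have nonnegative second derivative on `[m, M]`, they are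
convex there and lie above their tangent lines, which says `k (t - x)² / 2 ≤ R(x, t) ≤ K (t - x)² / 2`
for `x, t ∈ [m, M]`. Put `x = X` and take expectations: `E[R(X, t)]` is exactly the middle term.
-/

open MeasureTheory Set

theorem ConvexOn.add_deriv_mul_sub_le {S : Set ℝ} {g : ℝ → ℝ} (hg : ConvexOn ℝ S g)
    {x y : ℝ} (hx : x ∈ S) (hy : y ∈ S) (hgx : DifferentiableAt ℝ g x) :
    g x + deriv g x * (y - x) ≤ g y := by
  rcases lt_trichotomy x y with hxy | rfl | hyx
  · have h := hg.deriv_le_slope hx hy hxy hgx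
    rw [slope_def_field, le_div_iff₀ (sub_pos.mpr hxy)] at h
    linarith
  · simp
  · have h := hg.slope_le_deriv hy hx hyx hgx
    rw [slope_def_field, div_le_iff₀ (sub_pos.mpr hyx)] at h
    linarith

section TangentRemainder

variable {D : Set ℝ} {f : ℝ → ℝ} {k K : ℝ}

theorem HasDerivAt.sub_half_mul_sq {f' x : ℝ} (hf : HasDerivAt f f' x) (k : ℝ) :
    HasDerivAt (fun z => f z - k / 2 * z ^ 2) (f' - k * x) x :=
  (hf.fun_sub ((hasDerivAt_pow 2 x).const_mul (k / 2))).congr_deriv (by push_cast; ring)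

theorem convexOn_sub_half_mul_sq (hD : Convex ℝ D) (hf : ∀ x ∈ D, DifferentiableAt ℝ f x)
    (hf' : ∀ x ∈ interior D, DifferentiableAt ℝ (deriv f) x)
    (hk : ∀ x ∈ interior D, k ≤ deriv (deriv f) x) :
    ConvexOn ℝ D (fun z => f z - k / 2 * z ^ 2) := by
  refine convexOn_of_hasDerivWithinAt2_nonneg hD (f' := fun z => deriv f z - k * z)
    (f'' := fun z => deriv (deriv f) z - k) ?_ (fun x hx => ?_) (fun x hx => ?_)
    (fun x hx => sub_nonneg.mpr (hk x hx))
  · exact fun x hx => ((hf x hx).continuousAt.sub (by fun_prop)).continuousWithinAt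
  · exact ((hf x (interior_subset hx)).hasDerivAt.sub_half_mul_sq k).hasDerivWithinAt
  · simpa using ((hf' x hx).hasDerivAt.fun_sub ((hasDerivAt_id x).const_mul k)).hasDerivWithinAt

theorem half_mul_sq_le_sub_sub_deriv_mul (hD : Convex ℝ D)
    (hf : ∀ x ∈ D, DifferentiableAt ℝ f x)
    (hf' : ∀ x ∈ interior D, DifferentiableAt ℝ (deriv f) x)
    (hk : ∀ x ∈ interior D, k ≤ deriv (deriv f) x) {x y : ℝ} (hx : x ∈ D) (hy : y ∈ D) :
    k / 2 * (y - x) ^ 2 ≤ f y - f x - deriv f x * (y - x) := by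
  have hg := (hf x hx).hasDerivAt.sub_half_mul_sq k
  have h := (convexOn_sub_half_mul_sq hD hf hf' hk).add_deriv_mul_sub_le hx hy
    hg.differentiableAt
  rw [hg.deriv] at h
  linarith

theorem sub_sub_deriv_mul_le_half_mul_sq (hD : Convex ℝ D)
    (hf : ∀ x ∈ D, DifferentiableAt ℝ f x)
    (hf' : ∀ x ∈ interior D, DifferentiableAt ℝ (deriv f) x)
    (hK : ∀ x ∈ interior D, deriv (deriv f) x ≤ K) {x y : ℝ} (hx : x ∈ D) (hy : y ∈ D) :
    f y - f x - deriv f x * (y - x) ≤ K / 2 * (y - x) ^ 2 := by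
  have h := half_mul_sq_le_sub_sub_deriv_mul (f := -f) (k := -K) hD
    (fun x hx => (hf x hx).neg) (fun x hx => by simpa [deriv.neg'] using (hf' x hx).neg)
    (fun x hx => by simpa [deriv.neg'] using hK x hx) hx hy
  simp only [Pi.neg_apply, deriv.neg] at h
  linarith

end TangentRemainder

section Expectation

variable {Ω : Type*} [MeasurableSpace Ω] {P : Measure Ω} {X : Ω → ℝ}

theorem integrable_sub_sq_of_mem_Icc [IsFiniteMeasure P] {m M t : ℝ}
    (hX : ∀ᵐ ω ∂P, X ω ∈ Icc m M) (hXm : AEStronglyMeasurable X P) (ht : t ∈ Icc m M) :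
    Integrable (fun ω => (X ω - t) ^ 2) P := by
  refine .of_bound (by fun_prop) ((M - m) ^ 2) ?_
  filter_upwards [hX] with ω hω
  rw [Real.norm_eq_abs, abs_of_nonneg (sq_nonneg _)]
  nlinarith [hω.1, hω.2, ht.1, ht.2]

variable {F G : ℝ → ℝ} (t : ℝ)

theorem integrable_sub_sub_mul_sub [IsFiniteMeasure P] (hF : Integrable (fun ω => F (X ω)) P)
    (hG : Integrable (fun ω => G (X ω)) P) (hXG : Integrable (fun ω => X ω * G (X ω)) P) :
    Integrable (fun ω => F t - F (X ω) - G (X ω) * (t - X ω)) P := by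
  convert ((integrable_const (F t)).sub hF).sub ((hG.const_mul t).sub hXG) using 1
  ext ω
  simp only [Pi.sub_apply]
  ring

theorem integral_sub_sub_mul_sub [IsProbabilityMeasure P] (hF : Integrable (fun ω => F (X ω)) P)
    (hG : Integrable (fun ω => G (X ω)) P) (hXG : Integrable (fun ω => X ω * G (X ω)) P) :
    ∫ ω, (F t - F (X ω) - G (X ω) * (t - X ω)) ∂P =
      (∫ ω, X ω * G (X ω) ∂P) - t * (∫ ω, G (X ω) ∂P) + F t - (∫ ω, F (X ω) ∂P) := by
  have hXG_sub : Integrable (fun ω => X ω * G (X ω) - t * G (X ω)) P := hXG.sub (hG.const_mul t)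
  calc ∫ ω, (F t - F (X ω) - G (X ω) * (t - X ω)) ∂P
      = ∫ ω, (X ω * G (X ω) - t * G (X ω) + F t - F (X ω)) ∂P := by
        congr with ω
        ring
    _ = _ := by
        rw [integral_sub (by exact hXG_sub.add (integrable_const _)) hF,
          integral_add hXG_sub (integrable_const _), integral_sub hXG (hG.const_mul t),
          integral_const_mul, integral_const, probReal_univ, one_smul]

end Expectation

theorem stmt_7_general {Ω : Type*} [MeasurableSpace Ω] (P : Measure Ω) [IsProbabilityMeasure P]
    (X : Ω → ℝ) (m M : ℝ)
    (hX : ∀ᵐ ω ∂P, X ω ∈ Set.Icc m M)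
    (hXint : Integrable X P)
    (f : ℝ → ℝ) (a b : ℝ) (ham : a < m) (hMb : M < b)
    (hdiff1 : ∀ x ∈ Set.Ioo a b, DifferentiableAt ℝ f x)
    (hdiff2 : ∀ x ∈ Set.Ioo a b, DifferentiableAt ℝ (deriv f) x)
    (k K : ℝ)
    (hbound : ∀ z ∈ Set.Icc m M, k ≤ deriv (deriv f) z ∧ deriv (deriv f) z ≤ K)
    (hfXint : Integrable (fun ω => f (X ω)) P)
    (hdfXint : Integrable (fun ω => deriv f (X ω)) P)
    (hXdfXint : Integrable (fun ω => X ω * deriv f (X ω)) P)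
    (t : ℝ) (ht : t ∈ Set.Icc m M) :
    K / 2 * (∫ ω, (X ω - t) ^ 2 ∂P) ≥
      (∫ ω, X ω * deriv f (X ω) ∂P) - t * (∫ ω, deriv f (X ω) ∂P) + f t
        - (∫ ω, f (X ω) ∂P) ∧
    (∫ ω, X ω * deriv f (X ω) ∂P) - t * (∫ ω, deriv f (X ω) ∂P) + f t
        - (∫ ω, f (X ω) ∂P) ≥
      k / 2 * (∫ ω, (X ω - t) ^ 2 ∂P) := by
  have hab : Icc m M ⊆ Ioo a b := Icc_subset_Ioo ham hMb
  have hf : ∀ x ∈ Icc m M, DifferentiableAt ℝ f x := fun x hx => hdiff1 x (hab hx)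
  have hf' : ∀ x ∈ interior (Icc m M), DifferentiableAt ℝ (deriv f) x := fun x hx =>
    hdiff2 x (hab (interior_subset hx))
  have hbound_interior : ∀ x ∈ interior (Icc m M), _ := fun x hx => hbound x (interior_subset hx)
  have hsq := integrable_sub_sq_of_mem_Icc hX hXint.aestronglyMeasurable ht
  have hrem := integrable_sub_sub_mul_sub t hfXint hdfXint hXdfXint
  rw [← integral_sub_sub_mul_sub t hfXint hdfXint hXdfXint, ← integral_const_mul,
    ← integral_const_mul]
  constructor
  · refine integral_mono_ae hrem (hsq.const_mul _) ?_
    filter_upwards [hX] with ω hω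
    rw [sub_sq_comm]
    exact sub_sub_deriv_mul_le_half_mul_sq (convex_Icc m M) hf hf'
      (fun x hx => (hbound_interior x hx).2) hω ht
  · refine integral_mono_ae (hsq.const_mul _) hrem ?_
    filter_upwards [hX] with ω hω
    rw [sub_sq_comm]
    exact half_mul_sq_le_sub_sub_deriv_mul (convex_Icc m M) hf hf'
      (fun x hx => (hbound_interior x hx).1) hω ht

theorem stmt_7 {Ω : Type*} [MeasurableSpace Ω] (P : Measure Ω) [IsProbabilityMeasure P]
    (X : Ω → ℝ) (m M : ℝ) (hmM : m < M)
    (hX : ∀ᵐ ω ∂P, X ω ∈ Set.Icc m M)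
    (hXint : Integrable X P)
    (hX2int : Integrable (fun ω => (X ω) ^ 2) P)
    (f : ℝ → ℝ) (a b : ℝ) (ham : a < m) (hMb : M < b)
    (hdiff1 : ∀ x ∈ Set.Ioo a b, DifferentiableAt ℝ f x)
    (hdiff2 : ∀ x ∈ Set.Ioo a b, DifferentiableAt ℝ (deriv f) x)
    (k K : ℝ) (hk : 0 ≤ k) (hkK : k < K)
    (hbound : ∀ z ∈ Set.Icc m M, k ≤ deriv (deriv f) z ∧ deriv (deriv f) z ≤ K)
    (hfXint : Integrable (fun ω => f (X ω)) P)
    (hdfXint : Integrable (fun ω => deriv f (X ω)) P)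
    (hXdfXint : Integrable (fun ω => X ω * deriv f (X ω)) P)
    (t : ℝ) (ht : t ∈ Set.Icc m M) :
    K / 2 * (∫ ω, (X ω - t) ^ 2 ∂P) ≥
      (∫ ω, X ω * deriv f (X ω) ∂P) - t * (∫ ω, deriv f (X ω) ∂P) + f t
        - (∫ ω, f (X ω) ∂P) ∧
    (∫ ω, X ω * deriv f (X ω) ∂P) - t * (∫ ω, deriv f (X ω) ∂P) + f t
        - (∫ ω, f (X ω) ∂P) ≥
      k / 2 * (∫ ω, (X ω - t) ^ 2 ∂P) :=
  stmt_7_general P X m M hX hXint f a b ham hMb hdiff1 hdiff2 k K hbound hfXint hdfXint hXdfXint t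
    ht
end

section
/- Let f be twice differentiable on an open interval containing [m, M] with k ≤ f″(z) ≤ K for all z ∈ [m, M], where K > k ≥ 0. Then (K/2)·(E[X²] − (E[X])²) ≥ E[f(X)] − f(E[X]) ≥ (k/2)·(E[X²] − (E[X])²). -/
/-!
The bounds `k ≤ f'' ≤ K` make `y ↦ f y - k y² / 2` and `y ↦ K y² / 2 - f y` convex on `[m, M]`,
and Jensen's inequality for these two functions is exactly the two claimed bounds, because
`E[X²] - (E X)²` is the Jensen gap of `y ↦ y²`.
-/

open MeasureTheory Set

section QuadraticPerturbation

variable {f : ℝ → ℝ} {m M : ℝ} (c d : ℝ)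

theorem convexOn_Icc_const_mul_sq_add_const_mul (hf : ContinuousOn f (Icc m M))
    (hf' : ∀ x ∈ Ioo m M, DifferentiableAt ℝ f x)
    (hf'' : ∀ x ∈ Ioo m M, DifferentiableAt ℝ (deriv f) x)
    (hnonneg : ∀ x ∈ Ioo m M, 0 ≤ 2 * c + d * deriv (deriv f) x) :
    ConvexOn ℝ (Icc m M) (fun y => c * y ^ 2 + d * f y) := by
  rw [← interior_Icc] at hf' hf'' hnonneg
  refine convexOn_of_hasDerivWithinAt2_nonneg (f' := fun y => 2 * c * y + d * deriv f y)
    (convex_Icc m M) ((continuousOn_const.mul (continuousOn_id.pow 2)).add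
      (continuousOn_const.mul hf)) (fun x hx => ?_) (fun x hx => ?_) hnonneg
  · exact (((hasDerivAt_pow 2 x).const_mul c).add
      ((hf' x hx).hasDerivAt.const_mul d)).hasDerivWithinAt.congr_deriv (by ring)
  · exact (((hasDerivAt_id x).const_mul (2 * c)).add
      ((hf'' x hx).hasDerivAt.const_mul d)).hasDerivWithinAt.congr_deriv (by ring)

theorem const_mul_sq_add_const_mul_integral_le {Ω : Type*} [MeasurableSpace Ω] (P : Measure Ω)
    [IsProbabilityMeasure P] {X : Ω → ℝ} (hX : ∀ᵐ ω ∂P, X ω ∈ Icc m M)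
    (hXint : Integrable X P) (hX2int : Integrable (fun ω => X ω ^ 2) P)
    (hfXint : Integrable (fun ω => f (X ω)) P) (hf : ContinuousOn f (Icc m M))
    (hconv : ConvexOn ℝ (Icc m M) (fun y => c * y ^ 2 + d * f y)) :
    c * (∫ ω, X ω ∂P) ^ 2 + d * f (∫ ω, X ω ∂P) ≤
      c * ∫ ω, X ω ^ 2 ∂P + d * ∫ ω, f (X ω) ∂P := by
  have hjensen := hconv.map_integral_le
    ((continuousOn_const.mul (continuousOn_id.pow 2)).add (continuousOn_const.mul hf))
    isClosed_Icc hX hXint ((hX2int.const_mul c).add (hfXint.const_mul d))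
  rwa [integral_add (hX2int.const_mul c) (hfXint.const_mul d), integral_const_mul,
    integral_const_mul] at hjensen

end QuadraticPerturbation

theorem stmt_8_general {Ω : Type*} [MeasurableSpace Ω] (P : Measure Ω) [IsProbabilityMeasure P]
    (X : Ω → ℝ) (m M : ℝ)
    (hX : ∀ᵐ ω ∂P, X ω ∈ Set.Icc m M)
    (hXint : Integrable X P)
    (hX2int : Integrable (fun ω => (X ω) ^ 2) P)
    (f : ℝ → ℝ) (a b : ℝ) (ham : a < m) (hMb : M < b)
    (hdiff1 : ∀ x ∈ Set.Ioo a b, DifferentiableAt ℝ f x)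
    (hdiff2 : ∀ x ∈ Set.Ioo a b, DifferentiableAt ℝ (deriv f) x)
    (k K : ℝ)
    (hbound : ∀ z ∈ Set.Icc m M, k ≤ deriv (deriv f) z ∧ deriv (deriv f) z ≤ K)
    (hfXint : Integrable (fun ω => f (X ω)) P)
     :
    K / 2 * ((∫ ω, (X ω) ^ 2 ∂P) - (∫ ω, X ω ∂P) ^ 2) ≥
      (∫ ω, f (X ω) ∂P) - f (∫ ω, X ω ∂P) ∧
    (∫ ω, f (X ω) ∂P) - f (∫ ω, X ω ∂P) ≥
      k / 2 * ((∫ ω, (X ω) ^ 2 ∂P) - (∫ ω, X ω ∂P) ^ 2) := by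
  have hIcc : Icc m M ⊆ Ioo a b := Icc_subset_Ioo ham hMb
  have hIoo : Ioo m M ⊆ Ioo a b := Ioo_subset_Icc_self.trans hIcc
  have hf : ContinuousOn f (Icc m M) := fun x hx =>
    (hdiff1 x (hIcc hx)).continuousAt.continuousWithinAt
  have hjensen (c d : ℝ) (hnonneg : ∀ x ∈ Icc m M, 0 ≤ 2 * c + d * deriv (deriv f) x) :=
    const_mul_sq_add_const_mul_integral_le c d P hX hXint hX2int hfXint hf <|
      convexOn_Icc_const_mul_sq_add_const_mul c d hf (fun x hx => hdiff1 x (hIoo hx))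
        (fun x hx => hdiff2 x (hIoo hx)) (fun x hx => hnonneg x (Ioo_subset_Icc_self hx))
  have hupper := hjensen (K / 2) (-1) fun x hx => by linarith [(hbound x hx).2]
  have hlower := hjensen (-(k / 2)) 1 fun x hx => by linarith [(hbound x hx).1]
  constructor <;> linarith

theorem stmt_8 {Ω : Type*} [MeasurableSpace Ω] (P : Measure Ω) [IsProbabilityMeasure P]
    (X : Ω → ℝ) (m M : ℝ) (hmM : m < M)
    (hX : ∀ᵐ ω ∂P, X ω ∈ Set.Icc m M)
    (hXint : Integrable X P)
    (hX2int : Integrable (fun ω => (X ω) ^ 2) P)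
    (f : ℝ → ℝ) (a b : ℝ) (ham : a < m) (hMb : M < b)
    (hdiff1 : ∀ x ∈ Set.Ioo a b, DifferentiableAt ℝ f x)
    (hdiff2 : ∀ x ∈ Set.Ioo a b, DifferentiableAt ℝ (deriv f) x)
    (k K : ℝ) (hk : 0 ≤ k) (hkK : k < K)
    (hbound : ∀ z ∈ Set.Icc m M, k ≤ deriv (deriv f) z ∧ deriv (deriv f) z ≤ K)
    (hfXint : Integrable (fun ω => f (X ω)) P)
    (hdfXint : Integrable (fun ω => deriv f (X ω)) P)
    (hXdfXint : Integrable (fun ω => X ω * deriv f (X ω)) P)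
     :
    K / 2 * ((∫ ω, (X ω) ^ 2 ∂P) - (∫ ω, X ω ∂P) ^ 2) ≥
      (∫ ω, f (X ω) ∂P) - f (∫ ω, X ω ∂P) ∧
    (∫ ω, f (X ω) ∂P) - f (∫ ω, X ω ∂P) ≥
      k / 2 * ((∫ ω, (X ω) ^ 2 ∂P) - (∫ ω, X ω ∂P) ^ 2) :=
  stmt_8_general P X m M hX hXint hX2int f a b ham hMb hdiff1 hdiff2 k K hbound hfXint
end

section
/- Let f be twice differentiable on an open interval containing [m, M] with k ≤ f″(z) ≤ K for all z ∈ [m, M], where K > k ≥ 0. Then (K/2)·(E[X²] − (E[X])²) ≥ E[X·f′(X)] − E[X]·E[f′(X)] + f(E[X]) − E[f(X)] ≥ (k/2)·(E[X²] − (E[X])²). -/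
/-!
For `x, y ∈ [m, M]` the bounds `k ≤ f'' ≤ K` give
`k/2 (y - x)² ≤ f y - f x - f' x (y - x) ≤ K/2 (y - x)²`: the lower bound is the tangent-line
inequality for the convex function `f - k/2 t²`, the upper one the same inequality for `-f`.
Taking `x = X`, `y = E X` and integrating, the middle term integrates to the expression of the
theorem and `(E X - X)²` to the variance `E X² - (E X)²`.
-/

open MeasureTheory ProbabilityTheory Set

theorem ConvexOn.add_mul_sub_le_of_hasDerivAt {S : Set ℝ} {f : ℝ → ℝ} {f' x y : ℝ}
    (hfc : ConvexOn ℝ S f) (hx : x ∈ S) (hy : y ∈ S) (hf : HasDerivAt f f' x) :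
    f x + f' * (y - x) ≤ f y := by
  rcases lt_trichotomy x y with hxy | rfl | hxy
  · have h := hfc.le_slope_of_hasDerivAt hx hy hxy hf
    rw [slope_def_field, le_div_iff₀ (sub_pos.2 hxy)] at h
    linarith
  · simp
  · have h := hfc.slope_le_of_hasDerivAt hy hx hxy hf
    rw [slope_def_field, div_le_iff₀ (sub_pos.2 hxy)] at h
    linarith

theorem convexOn_sub_half_mul_sq_of_le_deriv2 {D : Set ℝ} (hD : Convex ℝ D) {f : ℝ → ℝ} {c : ℝ}
    (hf : ∀ x ∈ D, DifferentiableAt ℝ f x)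
    (hf' : ∀ x ∈ interior D, DifferentiableAt ℝ (deriv f) x)
    (hc : ∀ x ∈ interior D, c ≤ deriv (deriv f) x) :
    ConvexOn ℝ D fun x => f x - c / 2 * x ^ 2 := by
  have hsq (x : ℝ) : HasDerivAt (fun x => c / 2 * x ^ 2) (c * x) x :=
    ((hasDerivAt_pow 2 x).const_mul (c / 2)).congr_deriv (by push_cast; ring)
  refine convexOn_of_hasDerivWithinAt2_nonneg hD
    (fun x hx => ((hf x hx).hasDerivAt.sub (hsq x)).continuousAt.continuousWithinAt)
    (f' := fun x => deriv f x - c * x) (f'' := fun x => deriv (deriv f) x - c)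
    (fun x hx => ((hf x (interior_subset hx)).hasDerivAt.sub (hsq x)).hasDerivWithinAt)
    (fun x hx => ((hf' x hx).hasDerivAt.sub
      (((hasDerivAt_id x).const_mul c).congr_deriv (mul_one c))).hasDerivWithinAt)
    (fun x hx => sub_nonneg.2 (hc x hx))

theorem le_taylor_remainder_of_le_deriv2 {D : Set ℝ} (hD : Convex ℝ D) {f : ℝ → ℝ} {c : ℝ}
    (hf : ∀ x ∈ D, DifferentiableAt ℝ f x)
    (hf' : ∀ x ∈ interior D, DifferentiableAt ℝ (deriv f) x)
    (hc : ∀ x ∈ interior D, c ≤ deriv (deriv f) x) {x y : ℝ} (hx : x ∈ D) (hy : y ∈ D) :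
    c / 2 * (y - x) ^ 2 ≤ f y - f x - deriv f x * (y - x) := by
  have hg : HasDerivAt (fun x => f x - c / 2 * x ^ 2) (deriv f x - c * x) x :=
    ((hf x hx).hasDerivAt.sub ((hasDerivAt_pow 2 x).const_mul (c / 2))).congr_deriv
      (by push_cast; ring)
  have h :=
    (convexOn_sub_half_mul_sq_of_le_deriv2 hD hf hf' hc).add_mul_sub_le_of_hasDerivAt hx hy hg
  linear_combination h

theorem taylor_remainder_le_of_deriv2_le {D : Set ℝ} (hD : Convex ℝ D) {f : ℝ → ℝ} {C : ℝ}
    (hf : ∀ x ∈ D, DifferentiableAt ℝ f x)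
    (hf' : ∀ x ∈ interior D, DifferentiableAt ℝ (deriv f) x)
    (hC : ∀ x ∈ interior D, deriv (deriv f) x ≤ C) {x y : ℝ} (hx : x ∈ D) (hy : y ∈ D) :
    f y - f x - deriv f x * (y - x) ≤ C / 2 * (y - x) ^ 2 := by
  have hneg : deriv (fun t => -f t) = fun t => -deriv f t := funext fun _ => deriv.fun_neg
  have h := le_taylor_remainder_of_le_deriv2 (f := fun t => -f t) (c := -C) hD
    (fun x hx => (hf x hx).neg) (fun x hx => hneg ▸ (hf' x hx).neg)
    (fun x hx => by simpa only [hneg, deriv.fun_neg, neg_le_neg_iff] using hC x hx) hx hy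
  rw [hneg] at h
  linear_combination h

section TaylorRemainder

variable {Ω : Type*} [MeasurableSpace Ω] {P : Measure Ω} [IsProbabilityMeasure P]
  {X : Ω → ℝ} {f g : ℝ → ℝ}

theorem integrable_taylor_remainder (y : ℝ) (hf : Integrable (fun ω => f (X ω)) P)
    (hg : Integrable (fun ω => g (X ω)) P) (hXg : Integrable (fun ω => X ω * g (X ω)) P) :
    Integrable (fun ω => f y - f (X ω) - g (X ω) * (y - X ω)) P :=
  (((integrable_const (f y)).sub hf).sub ((hg.const_mul y).sub hXg)).congr <|
    .of_forall fun ω => by simp only [Pi.sub_apply]; ring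

theorem integral_taylor_remainder (y : ℝ) (hf : Integrable (fun ω => f (X ω)) P)
    (hg : Integrable (fun ω => g (X ω)) P) (hXg : Integrable (fun ω => X ω * g (X ω)) P) :
    ∫ ω, (f y - f (X ω) - g (X ω) * (y - X ω)) ∂P =
      (∫ ω, X ω * g (X ω) ∂P) - y * (∫ ω, g (X ω) ∂P) + f y - ∫ ω, f (X ω) ∂P := by
  have hfy : Integrable (fun ω => f y - f (X ω)) P := (integrable_const _).sub hf
  have hgy : Integrable (fun ω => y * g (X ω) - X ω * g (X ω)) P := (hg.const_mul y).sub hXg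
  have hsplit : (fun ω => f y - f (X ω) - g (X ω) * (y - X ω)) =
      fun ω => (f y - f (X ω)) - (y * g (X ω) - X ω * g (X ω)) := by
    ext ω; ring
  rw [hsplit, integral_sub hfy hgy, integral_sub (integrable_const _) hf,
    integral_sub (hg.const_mul y) hXg, integral_const, integral_const_mul, probReal_univ, one_smul]
  ring

end TaylorRemainder

theorem stmt_9_general {Ω : Type*} [MeasurableSpace Ω] (P : Measure Ω) [IsProbabilityMeasure P]
    (X : Ω → ℝ) (m M : ℝ)
    (hX : ∀ᵐ ω ∂P, X ω ∈ Set.Icc m M)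
    (hXint : Integrable X P)
    (hX2int : Integrable (fun ω => (X ω) ^ 2) P)
    (f : ℝ → ℝ) (a b : ℝ) (ham : a < m) (hMb : M < b)
    (hdiff1 : ∀ x ∈ Set.Ioo a b, DifferentiableAt ℝ f x)
    (hdiff2 : ∀ x ∈ Set.Ioo a b, DifferentiableAt ℝ (deriv f) x)
    (k K : ℝ)
    (hbound : ∀ z ∈ Set.Icc m M, k ≤ deriv (deriv f) z ∧ deriv (deriv f) z ≤ K)
    (hfXint : Integrable (fun ω => f (X ω)) P)
    (hdfXint : Integrable (fun ω => deriv f (X ω)) P)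
    (hXdfXint : Integrable (fun ω => X ω * deriv f (X ω)) P)
     :
    K / 2 * ((∫ ω, (X ω) ^ 2 ∂P) - (∫ ω, X ω ∂P) ^ 2) ≥
      (∫ ω, X ω * deriv f (X ω) ∂P) - (∫ ω, X ω ∂P) * (∫ ω, deriv f (X ω) ∂P)
        + f (∫ ω, X ω ∂P) - (∫ ω, f (X ω) ∂P) ∧
    (∫ ω, X ω * deriv f (X ω) ∂P) - (∫ ω, X ω ∂P) * (∫ ω, deriv f (X ω) ∂P)
        + f (∫ ω, X ω ∂P) - (∫ ω, f (X ω) ∂P) ≥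
      k / 2 * ((∫ ω, (X ω) ^ 2 ∂P) - (∫ ω, X ω ∂P) ^ 2) := by
  set μ := ∫ ω, X ω ∂P
  have hIcc : Icc m M ⊆ Ioo a b := Icc_subset_Ioo ham hMb
  have hf (x) (hx : x ∈ Icc m M) : DifferentiableAt ℝ f x := hdiff1 x (hIcc hx)
  have hf' (x) (hx : x ∈ interior (Icc m M)) : DifferentiableAt ℝ (deriv f) x :=
    hdiff2 x (hIcc (interior_subset hx))
  have hμ : μ ∈ Icc m M := (convex_Icc m M).integral_mem isClosed_Icc hX hXint
  have hXL2 : MemLp X 2 P := (memLp_two_iff_integrable_sq hXint.aestronglyMeasurable).2 hX2int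
  have hsq : Integrable (fun ω => (μ - X ω) ^ 2) P := ((memLp_const μ).sub hXL2).integrable_sq
  have hvar : ∫ ω, (μ - X ω) ^ 2 ∂P = (∫ ω, X ω ^ 2 ∂P) - μ ^ 2 := by
    simp_rw [sub_sq_comm μ]
    rw [← variance_eq_integral hXint.aemeasurable, variance_eq_sub hXL2]
    rfl
  have hR := integrable_taylor_remainder μ hfXint hdfXint hXdfXint
  have lower := integral_mono_ae (hsq.const_mul (k / 2)) hR <| hX.mono fun ω hω =>
    le_taylor_remainder_of_le_deriv2 (convex_Icc m M) hf hf'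
      (fun x hx => (hbound x (interior_subset hx)).1) hω hμ
  have upper := integral_mono_ae hR (hsq.const_mul (K / 2)) <| hX.mono fun ω hω =>
    taylor_remainder_le_of_deriv2_le (convex_Icc m M) hf hf'
      (fun x hx => (hbound x (interior_subset hx)).2) hω hμ
  rw [integral_const_mul, hvar,
    integral_taylor_remainder μ hfXint hdfXint hXdfXint] at lower upper
  exact ⟨upper, lower⟩

theorem stmt_9 {Ω : Type*} [MeasurableSpace Ω] (P : Measure Ω) [IsProbabilityMeasure P]
    (X : Ω → ℝ) (m M : ℝ) (hmM : m < M)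
    (hX : ∀ᵐ ω ∂P, X ω ∈ Set.Icc m M)
    (hXint : Integrable X P)
    (hX2int : Integrable (fun ω => (X ω) ^ 2) P)
    (f : ℝ → ℝ) (a b : ℝ) (ham : a < m) (hMb : M < b)
    (hdiff1 : ∀ x ∈ Set.Ioo a b, DifferentiableAt ℝ f x)
    (hdiff2 : ∀ x ∈ Set.Ioo a b, DifferentiableAt ℝ (deriv f) x)
    (k K : ℝ) (hk : 0 ≤ k) (hkK : k < K)
    (hbound : ∀ z ∈ Set.Icc m M, k ≤ deriv (deriv f) z ∧ deriv (deriv f) z ≤ K)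
    (hfXint : Integrable (fun ω => f (X ω)) P)
    (hdfXint : Integrable (fun ω => deriv f (X ω)) P)
    (hXdfXint : Integrable (fun ω => X ω * deriv f (X ω)) P)
     :
    K / 2 * ((∫ ω, (X ω) ^ 2 ∂P) - (∫ ω, X ω ∂P) ^ 2) ≥
      (∫ ω, X ω * deriv f (X ω) ∂P) - (∫ ω, X ω ∂P) * (∫ ω, deriv f (X ω) ∂P)
        + f (∫ ω, X ω ∂P) - (∫ ω, f (X ω) ∂P) ∧
    (∫ ω, X ω * deriv f (X ω) ∂P) - (∫ ω, X ω ∂P) * (∫ ω, deriv f (X ω) ∂P)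
        + f (∫ ω, X ω ∂P) - (∫ ω, f (X ω) ∂P) ≥
      k / 2 * ((∫ ω, (X ω) ^ 2 ∂P) - (∫ ω, X ω ∂P) ^ 2) :=
  stmt_9_general P X m M hX hXint hX2int f a b ham hMb hdiff1 hdiff2 k K hbound hfXint hdfXint
    hXdfXint
end

section
/- Let f be twice differentiable on an open interval containing [m, M] with k ≤ f″(z) ≤ K for all z ∈ [m, M], where K > k ≥ 0. If E[f′(X)] ≠ 0 and t* := E[X·f′(X)]/E[f′(X)] ∈ [m, M], then (K/2)·E[(X − t*)²] ≥ f′(t*)·t* − E[X]·f′(t*) − f(t*) + E[f(X)] ≥ (k/2)·E[(X − t*)²]. -/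
open MeasureTheory Set

/-! For `t ∈ [m, M]` the middle term is `E[f(X) - f(t) - f'(t)(X - t)]`, the expectation of the
Bregman divergence of `f` at `t`. Since `f - k x²/2` and `K x²/2 - f` are convex on `[m, M]`,
the tangent-line inequality for them squeezes this divergence pointwise between the divergences
`k (x - t)²/2` and `K (x - t)²/2` of the two quadratics; integrate. -/

noncomputable def bregmanDiv (f : ℝ → ℝ) (t x : ℝ) : ℝ := f x - f t - deriv f t * (x - t)

lemma ConvexOn.add_deriv_mul_sub_le_s11 {S : Set ℝ} {f : ℝ → ℝ} {f' t x : ℝ}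
    (hfc : ConvexOn ℝ S f) (ht : t ∈ S) (hx : x ∈ S) (hf : HasDerivAt f f' t) :
    f t + f' * (x - t) ≤ f x := by
  rcases lt_trichotomy t x with htx | rfl | hxt
  · have := hfc.le_slope_of_hasDerivAt ht hx htx hf
    rw [slope_def_field, le_div_iff₀ (sub_pos.2 htx)] at this
    linarith
  · simp
  · have := hfc.slope_le_of_hasDerivAt hx ht hxt hf
    rw [slope_def_field, div_le_iff₀ (sub_pos.2 hxt)] at this
    linarith

lemma convexOn_sub_of_deriv2_le {D : Set ℝ} (hD : Convex ℝ D) {f g : ℝ → ℝ}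
    (hf : ContinuousOn f D) (hg : ContinuousOn g D)
    (hf' : ∀ x ∈ interior D, DifferentiableAt ℝ f x)
    (hg' : ∀ x ∈ interior D, DifferentiableAt ℝ g x)
    (hf'' : ∀ x ∈ interior D, DifferentiableAt ℝ (deriv f) x)
    (hg'' : ∀ x ∈ interior D, DifferentiableAt ℝ (deriv g) x)
    (hle : ∀ x ∈ interior D, deriv (deriv g) x ≤ deriv (deriv f) x) :
    ConvexOn ℝ D (fun x => f x - g x) :=
  convexOn_of_hasDerivWithinAt2_nonneg hD (hf.sub hg)
    (fun x hx => ((hf' x hx).hasDerivAt.sub (hg' x hx).hasDerivAt).hasDerivWithinAt)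
    (fun x hx => ((hf'' x hx).hasDerivAt.sub (hg'' x hx).hasDerivAt).hasDerivWithinAt)
    (fun x hx => sub_nonneg.2 (hle x hx))

lemma bregmanDiv_le_of_convexOn_sub {S : Set ℝ} {f g : ℝ → ℝ} {t x : ℝ}
    (hfg : ConvexOn ℝ S (fun x => f x - g x)) (ht : t ∈ S) (hx : x ∈ S)
    (hf : DifferentiableAt ℝ f t) (hg : DifferentiableAt ℝ g t) :
    bregmanDiv g t x ≤ bregmanDiv f t x := by
  have := hfg.add_deriv_mul_sub_le_s11 ht hx (hf.hasDerivAt.sub hg.hasDerivAt)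
  simp only [bregmanDiv]
  linarith

lemma deriv_half_mul_sq (c : ℝ) : deriv (fun x : ℝ => c / 2 * x ^ 2) = fun x => c * x := by
  funext x
  have := (hasDerivAt_pow 2 x).const_mul (c / 2)
  rw [this.deriv]
  ring

lemma deriv2_half_mul_sq (c x : ℝ) : deriv (deriv (fun x : ℝ => c / 2 * x ^ 2)) x = c := by
  rw [deriv_half_mul_sq]
  simp

lemma bregmanDiv_half_mul_sq (c t x : ℝ) :
    bregmanDiv (fun x => c / 2 * x ^ 2) t x = c / 2 * (x - t) ^ 2 := by
  simp only [bregmanDiv, deriv_half_mul_sq]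
  ring

section TwiceDifferentiable

variable {D : Set ℝ} {f : ℝ → ℝ} {t x : ℝ}

lemma half_mul_sq_le_bregmanDiv (hD : Convex ℝ D) (hf : ∀ x ∈ D, DifferentiableAt ℝ f x)
    (hf' : ∀ x ∈ interior D, DifferentiableAt ℝ (deriv f) x) {k : ℝ}
    (hk : ∀ x ∈ interior D, k ≤ deriv (deriv f) x) (ht : t ∈ D) (hx : x ∈ D) :
    k / 2 * (x - t) ^ 2 ≤ bregmanDiv f t x := by
  rw [← bregmanDiv_half_mul_sq]
  refine bregmanDiv_le_of_convexOn_sub ?_ ht hx (hf t ht) (by fun_prop)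
  exact convexOn_sub_of_deriv2_le hD (fun x hx => (hf x hx).continuousAt.continuousWithinAt)
    (by fun_prop) (fun x hx => hf x (interior_subset hx)) (fun _ _ => by fun_prop) hf'
    (fun _ _ => by rw [deriv_half_mul_sq]; fun_prop)
    (fun x hx => by rw [deriv2_half_mul_sq]; exact hk x hx)

lemma bregmanDiv_le_half_mul_sq (hD : Convex ℝ D) (hf : ∀ x ∈ D, DifferentiableAt ℝ f x)
    (hf' : ∀ x ∈ interior D, DifferentiableAt ℝ (deriv f) x) {K : ℝ}
    (hK : ∀ x ∈ interior D, deriv (deriv f) x ≤ K) (ht : t ∈ D) (hx : x ∈ D) :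
    bregmanDiv f t x ≤ K / 2 * (x - t) ^ 2 := by
  rw [← bregmanDiv_half_mul_sq]
  refine bregmanDiv_le_of_convexOn_sub ?_ ht hx (by fun_prop) (hf t ht)
  exact convexOn_sub_of_deriv2_le hD (by fun_prop)
    (fun x hx => (hf x hx).continuousAt.continuousWithinAt) (fun _ _ => by fun_prop)
    (fun x hx => hf x (interior_subset hx)) (fun _ _ => by rw [deriv_half_mul_sq]; fun_prop) hf'
    (fun x hx => by rw [deriv2_half_mul_sq]; exact hK x hx)

end TwiceDifferentiable

section Expectation

variable {Ω : Type*} [MeasurableSpace Ω] {P : Measure Ω} {X : Ω → ℝ} {f : ℝ → ℝ}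

lemma integrable_bregmanDiv_comp [IsFiniteMeasure P] (hX : Integrable X P)
    (hfX : Integrable (fun ω => f (X ω)) P) (t : ℝ) :
    Integrable (fun ω => bregmanDiv f t (X ω)) P :=
  (hfX.sub (integrable_const _)).sub ((hX.sub (integrable_const t)).const_mul _)

lemma integral_bregmanDiv_comp [IsProbabilityMeasure P] (hX : Integrable X P)
    (hfX : Integrable (fun ω => f (X ω)) P) (t : ℝ) :
    ∫ ω, bregmanDiv f t (X ω) ∂P =
      (∫ ω, f (X ω) ∂P) - f t - deriv f t * ((∫ ω, X ω ∂P) - t) := by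
  have hXt : Integrable (fun ω => X ω - t) P := hX.sub (integrable_const t)
  have hfXt : Integrable (fun ω => f (X ω) - f t) P := hfX.sub (integrable_const _)
  simp only [bregmanDiv]
  rw [integral_sub hfXt (hXt.const_mul _), integral_sub hfX (integrable_const _),
    integral_const_mul, integral_sub hX (integrable_const t)]
  simp

end Expectation

theorem stmt_11_general {Ω : Type*} [MeasurableSpace Ω] (P : Measure Ω) [IsProbabilityMeasure P]
    (X : Ω → ℝ) (m M : ℝ)
    (hX : ∀ᵐ ω ∂P, X ω ∈ Set.Icc m M)
    (hXint : Integrable X P)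
    (hX2int : Integrable (fun ω => (X ω) ^ 2) P)
    (f : ℝ → ℝ) (a b : ℝ) (ham : a < m) (hMb : M < b)
    (hdiff1 : ∀ x ∈ Set.Ioo a b, DifferentiableAt ℝ f x)
    (hdiff2 : ∀ x ∈ Set.Ioo a b, DifferentiableAt ℝ (deriv f) x)
    (k K : ℝ)
    (hbound : ∀ z ∈ Set.Icc m M, k ≤ deriv (deriv f) z ∧ deriv (deriv f) z ≤ K)
    (hfXint : Integrable (fun ω => f (X ω)) P)
    (hts : (∫ ω, X ω * deriv f (X ω) ∂P) / (∫ ω, deriv f (X ω) ∂P) ∈ Set.Icc m M) :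
    let ts := (∫ ω, X ω * deriv f (X ω) ∂P) / (∫ ω, deriv f (X ω) ∂P)
    K / 2 * (∫ ω, (X ω - ts) ^ 2 ∂P) ≥
      deriv f ts * ts - (∫ ω, X ω ∂P) * deriv f ts - f ts + (∫ ω, f (X ω) ∂P) ∧
    deriv f ts * ts - (∫ ω, X ω ∂P) * deriv f ts - f ts + (∫ ω, f (X ω) ∂P) ≥
      k / 2 * (∫ ω, (X ω - ts) ^ 2 ∂P) := by
  intro ts
  have hsub : Icc m M ⊆ Ioo a b := Icc_subset_Ioo ham hMb
  have hf : ∀ x ∈ Icc m M, DifferentiableAt ℝ f x := fun x hx => hdiff1 x (hsub hx)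
  have hf' : ∀ x ∈ interior (Icc m M), DifferentiableAt ℝ (deriv f) x := fun x hx =>
    hdiff2 x (hsub (interior_subset hx))
  have hsq : Integrable (fun ω => (X ω - ts) ^ 2) P :=
    ((hX2int.sub (hXint.mul_const (2 * ts))).add (integrable_const (ts ^ 2))).congr
      (ae_of_all _ fun ω => by simp only [Pi.add_apply, Pi.sub_apply]; ring)
  have hbreg := integrable_bregmanDiv_comp hXint hfXint ts
  have hlow : k / 2 * ∫ ω, (X ω - ts) ^ 2 ∂P ≤ ∫ ω, bregmanDiv f ts (X ω) ∂P := by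
    rw [← integral_const_mul]
    refine integral_mono_ae (hsq.const_mul _) hbreg ?_
    filter_upwards [hX] with ω hω
    exact half_mul_sq_le_bregmanDiv (convex_Icc m M) hf hf'
      (fun z hz => (hbound z (interior_subset hz)).1) hts hω
  have hup : ∫ ω, bregmanDiv f ts (X ω) ∂P ≤ K / 2 * ∫ ω, (X ω - ts) ^ 2 ∂P := by
    rw [← integral_const_mul]
    refine integral_mono_ae hbreg (hsq.const_mul _) ?_
    filter_upwards [hX] with ω hω
    exact bregmanDiv_le_half_mul_sq (convex_Icc m M) hf hf'
      (fun z hz => (hbound z (interior_subset hz)).2) hts hω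
  rw [integral_bregmanDiv_comp hXint hfXint] at hlow hup
  constructor <;> linarith

theorem stmt_11 {Ω : Type*} [MeasurableSpace Ω] (P : Measure Ω) [IsProbabilityMeasure P]
    (X : Ω → ℝ) (m M : ℝ) (hmM : m < M)
    (hX : ∀ᵐ ω ∂P, X ω ∈ Set.Icc m M)
    (hXint : Integrable X P)
    (hX2int : Integrable (fun ω => (X ω) ^ 2) P)
    (f : ℝ → ℝ) (a b : ℝ) (ham : a < m) (hMb : M < b)
    (hdiff1 : ∀ x ∈ Set.Ioo a b, DifferentiableAt ℝ f x)
    (hdiff2 : ∀ x ∈ Set.Ioo a b, DifferentiableAt ℝ (deriv f) x)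
    (k K : ℝ) (hk : 0 ≤ k) (hkK : k < K)
    (hbound : ∀ z ∈ Set.Icc m M, k ≤ deriv (deriv f) z ∧ deriv (deriv f) z ≤ K)
    (hfXint : Integrable (fun ω => f (X ω)) P)
    (hdfXint : Integrable (fun ω => deriv f (X ω)) P)
    (hXdfXint : Integrable (fun ω => X ω * deriv f (X ω)) P)
    (hne : (∫ ω, deriv f (X ω) ∂P) ≠ 0)
    (hts : (∫ ω, X ω * deriv f (X ω) ∂P) / (∫ ω, deriv f (X ω) ∂P) ∈ Set.Icc m M) :
    let ts := (∫ ω, X ω * deriv f (X ω) ∂P) / (∫ ω, deriv f (X ω) ∂P)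
    K / 2 * (∫ ω, (X ω - ts) ^ 2 ∂P) ≥
      deriv f ts * ts - (∫ ω, X ω ∂P) * deriv f ts - f ts + (∫ ω, f (X ω) ∂P) ∧
    deriv f ts * ts - (∫ ω, X ω ∂P) * deriv f ts - f ts + (∫ ω, f (X ω) ∂P) ≥
      k / 2 * (∫ ω, (X ω - ts) ^ 2 ∂P) :=
  stmt_11_general P X m M hX hXint hX2int f a b ham hMb hdiff1 hdiff2 k K hbound hfXint hts
end

section
/- Let f be twice differentiable on an open interval containing [m, M] with k ≤ f″(z) ≤ K for all z ∈ [m, M], where K > k ≥ 0. Then (K/4)·[(M − m)²/12 + E[(X − (m + M)/2)²]] ≥ (1/2)·[E[f(X)] + ((M − E[X])·f(M) + (E[X] − m)·f(m))/(M − m)] − (1/(M − m))·∫_m^M f(t) dt ≥ (k/4)·[(M − m)²/12 + E[(X − (m + M)/2)²]]. -/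
/-!
Write `Φ(g)` (`hermiteHadamardGap`) for the middle expression of the inequality, viewed as a
functional of `g`; it is linear in `g`. If `g` is convex and continuous on `[m, M]`, splitting
`∫_m^M g` at a point `x` and bounding each piece by the trapezoid rule gives
`(1/(M-m)) ∫_m^M g ≤ ½ (g x + ((M - x) g M + (x - m) g m)/(M - m))`;
putting `x = X` and taking expectations yields `Φ(g) ≥ 0`. With `c = (m + M)/2`, the bounds
`k ≤ f'' ≤ K` make `K/2 (x - c)² - f` and `f - k/2 (x - c)²` convex, and a direct computation
gives `Φ(C/2 (x - c)²) = C/4 ((M - m)²/12 + E[(X - c)²])`.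
-/

open MeasureTheory Real

open Set

theorem ContinuousOn.integrable_comp_of_ae_mem_Icc {Ω : Type*} [MeasurableSpace Ω]
    {P : Measure Ω} [IsFiniteMeasure P] {X : Ω → ℝ} {g : ℝ → ℝ} {m M : ℝ}
    (hmM : m ≤ M) (hg : ContinuousOn g (Icc m M)) (hX : AEStronglyMeasurable X P)
    (hXmem : ∀ᵐ ω ∂P, X ω ∈ Icc m M) : Integrable (fun ω => g (X ω)) P := by
  obtain ⟨C, hC⟩ := isCompact_Icc.exists_bound_of_continuousOn hg
  -- `g ∘ projIcc` is continuous on all of `ℝ` and agrees with `g` on `[m, M]`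
  have hext : Continuous fun x => g (projIcc m M hmM x) :=
    hg.comp_continuous (continuous_subtype_val.comp continuous_projIcc) fun x =>
      (projIcc m M hmM x).2
  refine Integrable.of_bound ((hext.comp_aestronglyMeasurable hX).congr ?_) C ?_
  · filter_upwards [hXmem] with ω hω
    simp [projIcc_of_mem hmM hω]
  · filter_upwards [hXmem] with ω hω
    exact hC _ hω

theorem ConvexOn.intervalIntegral_le_trapezoid {g : ℝ → ℝ} {p q : ℝ} (hpq : p ≤ q)
    (hg : ConvexOn ℝ (Icc p q) g) (hint : IntervalIntegrable g volume p q) :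
    ∫ t in p..q, g t ≤ (q - p) * (g p + g q) / 2 := by
  rcases hpq.eq_or_lt with rfl | hpq
  · simp
  have hqp : q - p ≠ 0 := (sub_pos.2 hpq).ne'
  set chord : ℝ → ℝ := fun t => g p + (g q - g p) / (q - p) * (t - p)
  have hchord : ∀ t ∈ Icc p q, g t ≤ chord t := by
    intro t ⟨hpt, htq⟩
    have hcomb : ((q - t) / (q - p)) • p + ((t - p) / (q - p)) • q = t := by
      simp only [smul_eq_mul]; field_simp; ring
    have := hg.2 (left_mem_Icc.2 hpq.le) (right_mem_Icc.2 hpq.le)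
      (div_nonneg (sub_nonneg.2 htq) (sub_pos.2 hpq).le)
      (div_nonneg (sub_nonneg.2 hpt) (sub_pos.2 hpq).le) (by field_simp; ring)
    rw [hcomb] at this
    refine this.trans_eq ?_
    simp only [chord, smul_eq_mul]; field_simp; ring
  have hslope : Continuous fun t : ℝ => (g q - g p) / (q - p) * (t - p) := by fun_prop
  calc ∫ t in p..q, g t ≤ ∫ t in p..q, chord t :=
        intervalIntegral.integral_mono_on hpq.le hint
          ((continuous_const.add hslope).intervalIntegrable _ _) hchord
    _ = (q - p) * (g p + g q) / 2 := by
        rw [intervalIntegral.integral_add intervalIntegrable_const (hslope.intervalIntegrable _ _),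
          intervalIntegral.integral_const_mul,
          intervalIntegral.integral_comp_sub_right (fun x => x)]
        simp only [integral_id, intervalIntegral.integral_const, smul_eq_mul]
        field_simp; ring

theorem ConvexOn.intervalIntegral_le_of_mem_Icc {g : ℝ → ℝ} {m M x : ℝ} (hx : x ∈ Icc m M)
    (hg : ConvexOn ℝ (Icc m M) g) (hgc : ContinuousOn g (Icc m M)) :
    ∫ t in m..M, g t ≤ ((M - m) * g x + (x - m) * g m + (M - x) * g M) / 2 := by
  have hsub₁ : Icc m x ⊆ Icc m M := Icc_subset_Icc le_rfl hx.2
  have hsub₂ : Icc x M ⊆ Icc m M := Icc_subset_Icc hx.1 le_rfl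
  have hi₁ : IntervalIntegrable g volume m x := (hgc.mono hsub₁).intervalIntegrable_of_Icc hx.1
  have hi₂ : IntervalIntegrable g volume x M := (hgc.mono hsub₂).intervalIntegrable_of_Icc hx.2
  have h₁ := (hg.subset hsub₁ (convex_Icc m x)).intervalIntegral_le_trapezoid hx.1 hi₁
  have h₂ := (hg.subset hsub₂ (convex_Icc x M)).intervalIntegral_le_trapezoid hx.2 hi₂
  rw [← intervalIntegral.integral_add_adjacent_intervals hi₁ hi₂]
  linarith

section HermiteHadamardGap

variable {Ω : Type*} [MeasurableSpace Ω] (P : Measure Ω) (X : Ω → ℝ) (m M : ℝ)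

noncomputable def hermiteHadamardGap (g : ℝ → ℝ) : ℝ :=
  (1 / 2) * ((∫ ω, g (X ω) ∂P) +
      ((M - (∫ ω, X ω ∂P)) * g M + ((∫ ω, X ω ∂P) - m) * g m) / (M - m))
    - (1 / (M - m)) * ∫ t in m..M, g t

variable {P X m M}

theorem hermiteHadamardGap_nonneg [IsProbabilityMeasure P] (hmM : m < M)
    (hX : ∀ᵐ ω ∂P, X ω ∈ Icc m M) (hXint : Integrable X P) {g : ℝ → ℝ}
    (hg : ConvexOn ℝ (Icc m M) g) (hgc : ContinuousOn g (Icc m M)) :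
    0 ≤ hermiteHadamardGap P X m M g := by
  have hMm : M - m ≠ 0 := (sub_pos.2 hmM).ne'
  set h : ℝ → ℝ := fun x => (1 / 2) * (g x + ((M - x) * g M + (x - m) * g m) / (M - m))
  have hpt : ∀ x ∈ Icc m M, (1 / (M - m)) * ∫ t in m..M, g t ≤ h x := by
    intro x hx
    have := hg.intervalIntegral_le_of_mem_Icc hx hgc
    rw [← sub_nonneg] at this ⊢
    refine (div_nonneg this (sub_pos.2 hmM).le).trans_eq ?_
    simp only [h]; field_simp; ring
  have hmean : ∫ ω, h (X ω) ∂P = (1 / 2) * ((∫ ω, g (X ω) ∂P) +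
      ((M - (∫ ω, X ω ∂P)) * g M + ((∫ ω, X ω ∂P) - m) * g m) / (M - m)) := by
    have haff : ∀ x, h x = (1 / 2) * g x + ((g m - g M) / (2 * (M - m)) * x
        + (M * g M - m * g m) / (2 * (M - m))) := by
      intro x; simp only [h]; field_simp; ring
    simp only [haff]
    have hXaff (a b : ℝ) : Integrable (fun ω => a * X ω + b) P :=
      (hXint.const_mul a).add (integrable_const b)
    rw [integral_add ((hgc.integrable_comp_of_ae_mem_Icc hmM.le hXint.1 hX).const_mul _)
        (hXaff _ _), integral_add (hXint.const_mul _) (integrable_const _), integral_const_mul,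
      integral_const_mul, integral_const, probReal_univ, one_smul]
    field_simp; ring
  have hhc : ContinuousOn h (Icc m M) := by fun_prop
  have := integral_mono_ae (integrable_const ((1 / (M - m)) * ∫ t in m..M, g t))
    (hhc.integrable_comp_of_ae_mem_Icc hmM.le hXint.1 hX) (hX.mono fun ω hω => hpt _ hω)
  rw [integral_const, probReal_univ, one_smul, hmean] at this
  exact sub_nonneg.2 this

theorem hermiteHadamardGap_sub {g h : ℝ → ℝ} (hgX : Integrable (fun ω => g (X ω)) P)
    (hhX : Integrable (fun ω => h (X ω)) P) (hg : IntervalIntegrable g volume m M)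
    (hh : IntervalIntegrable h volume m M) :
    hermiteHadamardGap P X m M (fun x => g x - h x) =
      hermiteHadamardGap P X m M g - hermiteHadamardGap P X m M h := by
  simp only [hermiteHadamardGap]
  rw [integral_sub hgX hhX, intervalIntegral.integral_sub hg hh]
  ring

theorem hermiteHadamardGap_le_of_convexOn_sub [IsProbabilityMeasure P] (hmM : m < M)
    (hX : ∀ᵐ ω ∂P, X ω ∈ Icc m M) (hXint : Integrable X P) {f g : ℝ → ℝ}
    (hfc : ContinuousOn f (Icc m M)) (hgc : ContinuousOn g (Icc m M))
    (hconv : ConvexOn ℝ (Icc m M) fun x => g x - f x) :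
    hermiteHadamardGap P X m M f ≤ hermiteHadamardGap P X m M g := by
  have := hermiteHadamardGap_nonneg hmM hX hXint hconv (hgc.sub hfc)
  rw [hermiteHadamardGap_sub (hgc.integrable_comp_of_ae_mem_Icc hmM.le hXint.1 hX)
    (hfc.integrable_comp_of_ae_mem_Icc hmM.le hXint.1 hX) (hgc.intervalIntegrable_of_Icc hmM.le)
    (hfc.intervalIntegrable_of_Icc hmM.le)] at this
  linarith

theorem hermiteHadamardGap_half_mul_sq [IsProbabilityMeasure P] (hmM : m < M) (C : ℝ) :
    hermiteHadamardGap P X m M (fun x => C / 2 * (x - (m + M) / 2) ^ 2) =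
      C / 4 * ((M - m) ^ 2 / 12 + ∫ ω, (X ω - (m + M) / 2) ^ 2 ∂P) := by
  have hMm : M - m ≠ 0 := (sub_pos.2 hmM).ne'
  simp only [hermiteHadamardGap, integral_const_mul, intervalIntegral.integral_const_mul,
    intervalIntegral.integral_comp_sub_right (fun x => x ^ 2), integral_pow]
  field_simp
  ring

end HermiteHadamardGap

theorem convexOn_Icc_sub_of_deriv2_le {f g : ℝ → ℝ} {m M : ℝ}
    (hfc : ContinuousOn f (Icc m M)) (hgc : ContinuousOn g (Icc m M))
    (hf : ∀ x ∈ Ioo m M, DifferentiableAt ℝ f x)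
    (hf' : ∀ x ∈ Ioo m M, DifferentiableAt ℝ (deriv f) x)
    (hg : ∀ x ∈ Ioo m M, DifferentiableAt ℝ g x)
    (hg' : ∀ x ∈ Ioo m M, DifferentiableAt ℝ (deriv g) x)
    (hle : ∀ x ∈ Ioo m M, deriv (deriv f) x ≤ deriv (deriv g) x) :
    ConvexOn ℝ (Icc m M) fun x => g x - f x := by
  refine convexOn_of_hasDerivWithinAt2_nonneg (convex_Icc m M) (hgc.sub hfc)
    (f' := fun x => deriv g x - deriv f x) (f'' := fun x => deriv (deriv g) x - deriv (deriv f) x)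
    ?_ ?_ ?_ <;> rw [interior_Icc] <;> intro x hx
  · exact ((hg x hx).hasDerivAt.sub (hf x hx).hasDerivAt).hasDerivWithinAt
  · exact ((hg' x hx).hasDerivAt.sub (hf' x hx).hasDerivAt).hasDerivWithinAt
  · exact sub_nonneg.2 (hle x hx)

theorem stmt_12_general {Ω : Type*} [MeasurableSpace Ω] (P : Measure Ω) [IsProbabilityMeasure P]
    (X : Ω → ℝ) (m M : ℝ) (hmM : m < M)
    (hX : ∀ᵐ ω ∂P, X ω ∈ Set.Icc m M)
    (hXint : Integrable X P)
    (f : ℝ → ℝ) (a b : ℝ) (ham : a < m) (hMb : M < b)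
    (hdiff1 : ∀ x ∈ Set.Ioo a b, DifferentiableAt ℝ f x)
    (hdiff2 : ∀ x ∈ Set.Ioo a b, DifferentiableAt ℝ (deriv f) x)
    (k K : ℝ)
    (hbound : ∀ z ∈ Set.Icc m M, k ≤ deriv (deriv f) z ∧ deriv (deriv f) z ≤ K)
     :
    K / 4 * ((M - m) ^ 2 / 12 + (∫ ω, (X ω - (m + M) / 2) ^ 2 ∂P)) ≥
      (1 / 2) * ((∫ ω, f (X ω) ∂P) +
          ((M - (∫ ω, X ω ∂P)) * f M + ((∫ ω, X ω ∂P) - m) * f m) / (M - m))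
        - (1 / (M - m)) * ∫ t in m..M, f t ∧
    (1 / 2) * ((∫ ω, f (X ω) ∂P) +
          ((M - (∫ ω, X ω ∂P)) * f M + ((∫ ω, X ω ∂P) - m) * f m) / (M - m))
        - (1 / (M - m)) * ∫ t in m..M, f t ≥
      k / 4 * ((M - m) ^ 2 / 12 + (∫ ω, (X ω - (m + M) / 2) ^ 2 ∂P)) := by
  have hIcc : Icc m M ⊆ Ioo a b := Icc_subset_Ioo ham hMb
  have hIoo : Ioo m M ⊆ Ioo a b := Ioo_subset_Icc_self.trans hIcc
  have hfc : ContinuousOn f (Icc m M) := fun x hx =>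
    (hdiff1 x (hIcc hx)).continuousAt.continuousWithinAt
  set q : ℝ → ℝ → ℝ := fun C x => C / 2 * (x - (m + M) / 2) ^ 2
  have hq' (C : ℝ) : deriv (q C) = fun x => C * (x - (m + M) / 2) := by
    funext x; simp [q]; ring
  have hq'' (C x : ℝ) : deriv (deriv (q C)) x = C := by simp [hq']
  have hqc (C : ℝ) : ContinuousOn (q C) (Icc m M) := by fun_prop
  have hqd (C x : ℝ) : DifferentiableAt ℝ (q C) x := by fun_prop
  have hqd' (C x : ℝ) : DifferentiableAt ℝ (deriv (q C)) x := by
    rw [hq']; fun_prop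
  have hf1 : ∀ x ∈ Ioo m M, DifferentiableAt ℝ f x := fun x hx => hdiff1 x (hIoo hx)
  have hf2 : ∀ x ∈ Ioo m M, DifferentiableAt ℝ (deriv f) x := fun x hx => hdiff2 x (hIoo hx)
  constructor
  · rw [← hermiteHadamardGap_half_mul_sq (X := X) hmM K]
    exact hermiteHadamardGap_le_of_convexOn_sub hmM hX hXint hfc (hqc K)
      (convexOn_Icc_sub_of_deriv2_le hfc (hqc K) hf1 hf2 (fun x _ => hqd K x)
        (fun x _ => hqd' K x) fun x hx => (hq'' K x).symm ▸ (hbound x (Ioo_subset_Icc_self hx)).2)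
  · rw [← hermiteHadamardGap_half_mul_sq (X := X) hmM k]
    exact hermiteHadamardGap_le_of_convexOn_sub hmM hX hXint (hqc k) hfc
      (convexOn_Icc_sub_of_deriv2_le (hqc k) hfc (fun x _ => hqd k x) (fun x _ => hqd' k x)
        hf1 hf2 fun x hx => (hq'' k x).symm ▸ (hbound x (Ioo_subset_Icc_self hx)).1)

theorem stmt_12 {Ω : Type*} [MeasurableSpace Ω] (P : Measure Ω) [IsProbabilityMeasure P]
    (X : Ω → ℝ) (m M : ℝ) (hmM : m < M)
    (hX : ∀ᵐ ω ∂P, X ω ∈ Set.Icc m M)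
    (hXint : Integrable X P)
    (hX2int : Integrable (fun ω => (X ω) ^ 2) P)
    (f : ℝ → ℝ) (a b : ℝ) (ham : a < m) (hMb : M < b)
    (hdiff1 : ∀ x ∈ Set.Ioo a b, DifferentiableAt ℝ f x)
    (hdiff2 : ∀ x ∈ Set.Ioo a b, DifferentiableAt ℝ (deriv f) x)
    (k K : ℝ) (hk : 0 ≤ k) (hkK : k < K)
    (hbound : ∀ z ∈ Set.Icc m M, k ≤ deriv (deriv f) z ∧ deriv (deriv f) z ≤ K)
    (hfXint : Integrable (fun ω => f (X ω)) P)
    (hdfXint : Integrable (fun ω => deriv f (X ω)) P)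
    (hXdfXint : Integrable (fun ω => X ω * deriv f (X ω)) P)
     :
    K / 4 * ((M - m) ^ 2 / 12 + (∫ ω, (X ω - (m + M) / 2) ^ 2 ∂P)) ≥
      (1 / 2) * ((∫ ω, f (X ω) ∂P) +
          ((M - (∫ ω, X ω ∂P)) * f M + ((∫ ω, X ω ∂P) - m) * f m) / (M - m))
        - (1 / (M - m)) * ∫ t in m..M, f t ∧
    (1 / 2) * ((∫ ω, f (X ω) ∂P) +
          ((M - (∫ ω, X ω ∂P)) * f M + ((∫ ω, X ω ∂P) - m) * f m) / (M - m))
        - (1 / (M - m)) * ∫ t in m..M, f t ≥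
      k / 4 * ((M - m) ^ 2 / 12 + (∫ ω, (X ω - (m + M) / 2) ^ 2 ∂P)) :=
  stmt_12_general P X m M hmM hX hXint f a b ham hMb hdiff1 hdiff2 k K hbound
end

section
/- The variance of X satisfies 0 ≤ E[X²] − (E[X])² ≤ (M − E[X])·(E[X] − m) ≤ (1/4)(M − m)². -/
/-!
The variance of `X` is `E[X²] - E[X]²`, which is nonnegative. Integrating the pointwise inequality
`0 ≤ (M - X)(X - m)` gives the Bhatia–Davis bound `Var X ≤ (M - E X)(E X - m)`, and the product of
two numbers with sum `M - m` is at most `(M - m)² / 4`.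
-/

open MeasureTheory Real ProbabilityTheory

lemma sub_mul_sub_le_quarter_mul_sq (a b x : ℝ) : (b - x) * (x - a) ≤ 1 / 4 * (b - a) ^ 2 := by
  nlinarith [sq_nonneg (a + b - 2 * x)]

theorem stmt_16_general {Ω : Type*} [MeasurableSpace Ω] (P : Measure Ω) [IsProbabilityMeasure P]
    (X : Ω → ℝ) (m M : ℝ)
    (hX : ∀ᵐ ω ∂P, X ω ∈ Set.Icc m M)
    (hXint : Integrable X P) :
    0 ≤ (∫ ω, (X ω) ^ 2 ∂P) - (∫ ω, X ω ∂P) ^ 2 ∧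
    (∫ ω, (X ω) ^ 2 ∂P) - (∫ ω, X ω ∂P) ^ 2 ≤
      (M - (∫ ω, X ω ∂P)) * ((∫ ω, X ω ∂P) - m) ∧
    (M - (∫ ω, X ω ∂P)) * ((∫ ω, X ω ∂P) - m) ≤ (1 / 4) * (M - m) ^ 2 := by
  have hvar : variance X P = (∫ ω, (X ω) ^ 2 ∂P) - (∫ ω, X ω ∂P) ^ 2 :=
    variance_eq_sub (memLp_of_bounded hX hXint.aestronglyMeasurable 2)
  rw [← hvar]
  exact ⟨variance_nonneg X P, variance_le_sub_mul_sub hX hXint.aemeasurable,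
    sub_mul_sub_le_quarter_mul_sq m M _⟩

theorem stmt_16 {Ω : Type*} [MeasurableSpace Ω] (P : Measure Ω) [IsProbabilityMeasure P]
    (X : Ω → ℝ) (m M : ℝ) (hmM : m < M)
    (hX : ∀ᵐ ω ∂P, X ω ∈ Set.Icc m M)
    (hXint : Integrable X P)
    (hX2int : Integrable (fun ω => (X ω) ^ 2) P) :
    0 ≤ (∫ ω, (X ω) ^ 2 ∂P) - (∫ ω, X ω ∂P) ^ 2 ∧
    (∫ ω, (X ω) ^ 2 ∂P) - (∫ ω, X ω ∂P) ^ 2 ≤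
      (M - (∫ ω, X ω ∂P)) * ((∫ ω, X ω ∂P) - m) ∧
    (M - (∫ ω, X ω ∂P)) * ((∫ ω, X ω ∂P) - m) ≤ (1 / 4) * (M - m) ^ 2 :=
  stmt_16_general P X m M hX hXint
end

section
/- Let 0 < m < M and p > 1. Then 0 ≤ E[X^p] − (E[X])^p ≤ p·(M − E[X])·(E[X] − m)·(M^{p−1} − m^{p−1})/(M − m) ≤ (p/4)·(M − m)·(M^{p−1} − m^{p−1}). -/
/-!
Jensen's inequality gives the lower bound. For the upper bound, convexity puts `f` below its chord
on `[a, b]`, and the chord is affine, so `E[chord (X)] = chord (E[X])`. Adding the tangent-line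
inequalities of `f` at `a` and at `b`, weighted by `b - t` and `t - a`, bounds `chord t - f t` by
`(b - t) (t - a) (f'(b) - f'(a)) / (b - a)`, and `(b - t) (t - a) ≤ (b - a)² / 4`.
-/

open MeasureTheory Real Set

noncomputable def chord (f : ℝ → ℝ) (a b x : ℝ) : ℝ := f a + slope f a b * (x - a)

namespace ConvexOn

variable {f : ℝ → ℝ} {a b : ℝ}

lemma le_chord_s17 (hf : ConvexOn ℝ (Icc a b) f) {x : ℝ} (hx : x ∈ Icc a b) :
    f x ≤ chord f a b x := by
  rcases eq_or_lt_of_le hx.1 with rfl | hax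
  · simp [chord]
  have ha : a ∈ Icc a b := left_mem_Icc.2 (hax.le.trans hx.2)
  have hb : b ∈ Icc a b := right_mem_Icc.2 (hax.le.trans hx.2)
  have hslope := hf.secant_mono ha hx hb hax.ne' (hax.trans_le hx.2).ne' hx.2
  rw [div_le_iff₀ (sub_pos.2 hax)] at hslope
  rw [chord, slope_def_field]
  linarith

lemma add_mul_sub_le_of_hasDerivWithinAt {S : Set ℝ} {f' x y : ℝ} (hf : ConvexOn ℝ S f)
    (hx : x ∈ S) (hy : y ∈ S) (hf' : HasDerivWithinAt f f' S x) :
    f x + f' * (y - x) ≤ f y := by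
  rcases lt_trichotomy x y with hxy | rfl | hyx
  · have := hf.le_slope_of_hasDerivWithinAt hx hy hxy hf'
    rw [slope_def_field, le_div_iff₀ (sub_pos.2 hxy)] at this
    linarith
  · simp
  · have := hf.slope_le_of_hasDerivWithinAt hy hx hyx hf'
    rw [slope_def_field, div_le_iff₀ (sub_pos.2 hyx)] at this
    linarith

lemma chord_sub_le_s17 {fa fb t : ℝ} (hf : ConvexOn ℝ (Icc a b) f) (hab : a < b)
    (hfa : HasDerivWithinAt f fa (Icc a b) a) (hfb : HasDerivWithinAt f fb (Icc a b) b)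
    (ht : t ∈ Icc a b) :
    chord f a b t - f t ≤ (b - t) * (t - a) * (fb - fa) / (b - a) := by
  have ha : a ∈ Icc a b := left_mem_Icc.2 hab.le
  have hb : b ∈ Icc a b := right_mem_Icc.2 hab.le
  have tangent_a := hf.add_mul_sub_le_of_hasDerivWithinAt ha ht hfa
  have tangent_b := hf.add_mul_sub_le_of_hasDerivWithinAt hb ht hfb
  rw [chord, slope_def_field, le_div_iff₀ (sub_pos.2 hab)]
  have hba : b - a ≠ 0 := (sub_pos.2 hab).ne'
  calc ((f a + (f b - f a) / (b - a) * (t - a)) - f t) * (b - a)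
      = (b - t) * (f a - f t) + (t - a) * (f b - f t) := by field_simp; ring
    _ ≤ (b - t) * (-(fa * (t - a))) + (t - a) * (-(fb * (t - b))) := by
        gcongr
        · linarith [ht.2]
        · linarith
        · linarith [ht.1]
        · linarith
    _ = (b - t) * (t - a) * (fb - fa) := by ring

lemma le_of_hasDerivWithinAt_endpoints {fa fb : ℝ} (hf : ConvexOn ℝ (Icc a b) f) (hab : a < b)
    (hfa : HasDerivWithinAt f fa (Icc a b) a) (hfb : HasDerivWithinAt f fb (Icc a b) b) :
    fa ≤ fb :=
  (hf.le_slope_of_hasDerivWithinAt (left_mem_Icc.2 hab.le) (right_mem_Icc.2 hab.le) hab hfa).trans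
    (hf.slope_le_of_hasDerivWithinAt (left_mem_Icc.2 hab.le) (right_mem_Icc.2 hab.le) hab hfb)

end ConvexOn

section Probability

variable {Ω : Type*} [MeasurableSpace Ω] {P : Measure Ω} [IsProbabilityMeasure P] {X : Ω → ℝ}

lemma integral_chord (f : ℝ → ℝ) (a b : ℝ) (hX : Integrable X P) :
    ∫ ω, chord f a b (X ω) ∂P = chord f a b (∫ ω, X ω ∂P) := by
  have hXa : Integrable (fun ω => X ω - a) P := hX.sub (integrable_const a)
  simp only [chord]
  rw [integral_add (integrable_const _) (hXa.const_mul _), integral_const_mul,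
    integral_sub hX (integrable_const a)]
  simp

lemma ConvexOn.integral_comp_le_chord_s17 {f : ℝ → ℝ} {a b : ℝ} (hf : ConvexOn ℝ (Icc a b) f)
    (hXab : ∀ᵐ ω ∂P, X ω ∈ Icc a b) (hX : Integrable X P) (hfX : Integrable (f ∘ X) P) :
    ∫ ω, f (X ω) ∂P ≤ chord f a b (∫ ω, X ω ∂P) := by
  rw [← integral_chord f a b hX]
  refine integral_mono_ae hfX ?_ ?_
  · exact (integrable_const _).add ((hX.sub (integrable_const a)).const_mul _)
  · filter_upwards [hXab] with ω hω using hf.le_chord_s17 hω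

theorem ConvexOn.integral_comp_sub_map_integral_le {f : ℝ → ℝ} {a b fa fb : ℝ}
    (hf : ConvexOn ℝ (Icc a b) f) (hfc : ContinuousOn f (Icc a b)) (hab : a < b)
    (hfa : HasDerivWithinAt f fa (Icc a b) a) (hfb : HasDerivWithinAt f fb (Icc a b) b)
    (hXab : ∀ᵐ ω ∂P, X ω ∈ Icc a b) (hX : Integrable X P) (hfX : Integrable (f ∘ X) P) :
    0 ≤ ∫ ω, f (X ω) ∂P - f (∫ ω, X ω ∂P) ∧
    ∫ ω, f (X ω) ∂P - f (∫ ω, X ω ∂P) ≤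
      (b - ∫ ω, X ω ∂P) * (∫ ω, X ω ∂P - a) * (fb - fa) / (b - a) ∧
    (b - ∫ ω, X ω ∂P) * (∫ ω, X ω ∂P - a) * (fb - fa) / (b - a) ≤ (b - a) * (fb - fa) / 4 := by
  set μ := ∫ ω, X ω ∂P
  have hμ : μ ∈ Icc a b := (convex_Icc a b).integral_mem isClosed_Icc hXab hX
  have jensen : f μ ≤ ∫ ω, f (X ω) ∂P := hf.map_integral_le hfc isClosed_Icc hXab hX hfX
  have upper := hf.integral_comp_le_chord_s17 hXab hX hfX
  have gap := hf.chord_sub_le_s17 hab hfa hfb hμ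
  have hfab : 0 ≤ fb - fa := sub_nonneg.2 (hf.le_of_hasDerivWithinAt_endpoints hab hfa hfb)
  have amgm : (b - μ) * (μ - a) ≤ (b - a) ^ 2 / 4 := by nlinarith [sq_nonneg (a + b - 2 * μ)]
  refine ⟨by linarith, by linarith, ?_⟩
  rw [div_le_iff₀ (sub_pos.2 hab)]
  nlinarith [mul_le_mul_of_nonneg_right amgm hfab]

end Probability

theorem stmt_17 {Ω : Type*} [MeasurableSpace Ω] (P : Measure Ω) [IsProbabilityMeasure P]
    (X : Ω → ℝ) (m M : ℝ) (hm : 0 < m) (hmM : m < M)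
    (hX : ∀ᵐ ω ∂P, X ω ∈ Set.Icc m M)
    (hXint : Integrable X P)
    (p : ℝ) (hp : 1 < p)
    (hXpint : Integrable (fun ω => X ω ^ p) P) :
    0 ≤ (∫ ω, X ω ^ p ∂P) - (∫ ω, X ω ∂P) ^ p ∧
    (∫ ω, X ω ^ p ∂P) - (∫ ω, X ω ∂P) ^ p ≤
      p * (M - (∫ ω, X ω ∂P)) * ((∫ ω, X ω ∂P) - m) * (M ^ (p - 1) - m ^ (p - 1)) / (M - m) ∧
    p * (M - (∫ ω, X ω ∂P)) * ((∫ ω, X ω ∂P) - m) * (M ^ (p - 1) - m ^ (p - 1)) / (M - m) ≤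
      p / 4 * (M - m) * (M ^ (p - 1) - m ^ (p - 1)) := by
  have hpos : Icc m M ⊆ Ici 0 := fun x hx => le_trans hm.le hx.1
  have hconv : ConvexOn ℝ (Icc m M) fun x : ℝ => x ^ p :=
    (convexOn_rpow hp.le).subset hpos (convex_Icc m M)
  have hcont : ContinuousOn (fun x : ℝ => x ^ p) (Icc m M) :=
    continuousOn_id.rpow_const fun _ _ => Or.inr (by linarith)
  have hderiv (x : ℝ) : HasDerivWithinAt (fun x : ℝ => x ^ p) (p * x ^ (p - 1)) (Icc m M) x :=
    (hasDerivAt_rpow_const (Or.inr hp.le)).hasDerivWithinAt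
  obtain ⟨hjensen, hgap, hamgm⟩ := hconv.integral_comp_sub_map_integral_le hcont hmM
    (hderiv m) (hderiv M) hX hXint hXpint
  refine ⟨hjensen, ?_, ?_⟩
  · convert hgap using 1; ring
  · convert hamgm using 1 <;> ring
end

section
/- Let 0 < m < M. Then 0 ≤ ln(E[X]) − E[ln X] ≤ (M − E[X])·(E[X] − m)/(m·M) ≤ (M − m)²/(4·m·M). -/
/-!
Jensen's inequality for the concave function `log` gives the lower bound. For the upper bound,
`log x ≥ log y + 1 - y / x` (tangent of `log` at `y`, read at `x`) together with the chord bound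
`1 / x ≤ (m + M - x) / (m M)` on `[m, M]` gives a minorant of `log` that is affine in `x`;
integrating it at `y = E[X]` yields `E[log X] ≥ log E[X] - (M - E[X]) (E[X] - m) / (m M)`.
The last inequality is `4ab ≤ (a + b)²`.
-/

open MeasureTheory Real

lemma inv_le_add_sub_div_mul_of_mem_Icc {m M x : ℝ} (hm : 0 < m) (hx : x ∈ Set.Icc m M) :
    x⁻¹ ≤ (m + M - x) / (m * M) := by
  have hx0 : 0 < x := hm.trans_le hx.1
  have hmM : 0 < m * M := mul_pos hm (hx0.trans_le hx.2)
  rw [inv_eq_one_div, div_le_div_iff₀ hx0 hmM]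
  nlinarith [mul_nonneg (sub_nonneg.2 hx.2) (sub_nonneg.2 hx.1)]

lemma Real.log_add_one_sub_le_log_of_mem_Icc {m M x y : ℝ} (hm : 0 < m) (hx : x ∈ Set.Icc m M)
    (hy : 0 < y) : log y + 1 - y * (m + M - x) / (m * M) ≤ log x := by
  have hx0 : 0 < x := hm.trans_le hx.1
  have htangent : 1 - y / x ≤ log x - log y := by
    simpa [inv_div, log_div hx0.ne' hy.ne'] using one_sub_inv_le_log_of_pos (div_pos hx0 hy)
  have hchord : y / x ≤ y * (m + M - x) / (m * M) := by
    rw [div_eq_mul_inv, mul_div_assoc]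
    exact mul_le_mul_of_nonneg_left (inv_le_add_sub_div_mul_of_mem_Icc hm hx) hy.le
  linarith

lemma sub_mul_sub_div_le_sq_div_four {a b c d : ℝ} (hd : 0 ≤ d) :
    (b - c) * (c - a) / d ≤ (b - a) ^ 2 / (4 * d) := by
  rw [← div_div]
  gcongr
  rw [le_div_iff₀ four_pos]
  nlinarith [four_mul_le_sq_add (b - c) (c - a)]

section Probability

variable {Ω : Type*} [MeasurableSpace Ω] {P : Measure Ω} [IsProbabilityMeasure P] {X : Ω → ℝ}
  {m M : ℝ}

lemma integral_log_le_log_integral (hm : 0 < m) (hX : ∀ᵐ ω ∂P, X ω ∈ Set.Icc m M)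
    (hXint : Integrable X P) (hlogint : Integrable (fun ω => log (X ω)) P) :
    ∫ ω, log (X ω) ∂P ≤ log (∫ ω, X ω ∂P) :=
  (strictConcaveOn_log_Ioi.concaveOn.subset (fun _ hx => hm.trans_le hx.1)
    (convex_Icc m M)).le_map_integral
    (continuousOn_log.mono fun _ hx => (hm.trans_le hx.1).ne') isClosed_Icc hX hXint hlogint

lemma log_integral_sub_integral_log_le (hm : 0 < m) (hX : ∀ᵐ ω ∂P, X ω ∈ Set.Icc m M)
    (hXint : Integrable X P) (hlogint : Integrable (fun ω => log (X ω)) P) :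
    log (∫ ω, X ω ∂P) - ∫ ω, log (X ω) ∂P ≤
      (M - ∫ ω, X ω ∂P) * ((∫ ω, X ω ∂P) - m) / (m * M) := by
  set I := ∫ ω, X ω ∂P
  have hI : I ∈ Set.Icc m M := (convex_Icc m M).integral_mem isClosed_Icc hX hXint
  have hI0 : 0 < I := hm.trans_le hI.1
  have hmM : 0 < m * M := mul_pos hm (hI0.trans_le hI.2)
  have hslope_int : Integrable (fun ω => I * (m + M - X ω) / (m * M)) P :=
    (((integrable_const _).sub hXint).const_mul I).div_const _
  have hminorant : log I + 1 - I * (m + M - I) / (m * M) ≤ ∫ ω, log (X ω) ∂P := by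
    calc log I + 1 - I * (m + M - I) / (m * M)
        = ∫ ω, (log I + 1 - I * (m + M - X ω) / (m * M)) ∂P := by
          rw [integral_sub (integrable_const _) hslope_int, integral_div, integral_const_mul,
            integral_sub (integrable_const _) hXint]
          simp [I]
      _ ≤ ∫ ω, log (X ω) ∂P := integral_mono_ae ((integrable_const _).sub hslope_int) hlogint <|
          hX.mono fun ω hω => log_add_one_sub_le_log_of_mem_Icc hm hω hI0
  have hidentity : I * (m + M - I) / (m * M) - 1 = (M - I) * (I - m) / (m * M) := by
    rw [div_sub_one hmM.ne']
    ring
  linarith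

end Probability

theorem stmt_18_general {Ω : Type*} [MeasurableSpace Ω] (P : Measure Ω) [IsProbabilityMeasure P]
    (X : Ω → ℝ) (m M : ℝ) (hm : 0 < m)
    (hX : ∀ᵐ ω ∂P, X ω ∈ Set.Icc m M)
    (hXint : Integrable X P)
    (hlogint : Integrable (fun ω => Real.log (X ω)) P) :
    0 ≤ Real.log (∫ ω, X ω ∂P) - (∫ ω, Real.log (X ω) ∂P) ∧
    Real.log (∫ ω, X ω ∂P) - (∫ ω, Real.log (X ω) ∂P) ≤
      (M - (∫ ω, X ω ∂P)) * ((∫ ω, X ω ∂P) - m) / (m * M) ∧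
    (M - (∫ ω, X ω ∂P)) * ((∫ ω, X ω ∂P) - m) / (m * M) ≤ (M - m) ^ 2 / (4 * m * M) := by
  have hI := (convex_Icc m M).integral_mem isClosed_Icc hX hXint
  refine ⟨sub_nonneg.2 (integral_log_le_log_integral hm hX hXint hlogint),
    log_integral_sub_integral_log_le hm hX hXint hlogint, ?_⟩
  rw [mul_assoc]
  exact sub_mul_sub_div_le_sq_div_four (mul_pos hm (hm.trans_le (hI.1.trans hI.2))).le

theorem stmt_18 {Ω : Type*} [MeasurableSpace Ω] (P : Measure Ω) [IsProbabilityMeasure P]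
    (X : Ω → ℝ) (m M : ℝ) (hm : 0 < m) (hmM : m < M)
    (hX : ∀ᵐ ω ∂P, X ω ∈ Set.Icc m M)
    (hXint : Integrable X P)
    (hlogint : Integrable (fun ω => Real.log (X ω)) P) :
    0 ≤ Real.log (∫ ω, X ω ∂P) - (∫ ω, Real.log (X ω) ∂P) ∧
    Real.log (∫ ω, X ω ∂P) - (∫ ω, Real.log (X ω) ∂P) ≤
      (M - (∫ ω, X ω ∂P)) * ((∫ ω, X ω ∂P) - m) / (m * M) ∧
    (M - (∫ ω, X ω ∂P)) * ((∫ ω, X ω ∂P) - m) / (m * M) ≤ (M - m) ^ 2 / (4 * m * M) :=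
  stmt_18_general P X m M hm hX hXint hlogint
end

section
/- Let 0 < m < M. Then (1/(2m²))·(E[X²] − (E[X])²) ≥ ln(E[X]) − E[ln X] ≥ (1/(2M²))·(E[X²] − (E[X])²). -/
open MeasureTheory Real

/-!
If `f'' ≥ a` on an interval then `f - (a/2) x²` is convex there, and Jensen's inequality for it
says that the Jensen gap `E f(X) - f(E X)` is at least `(a/2) Var X`. Since `1/M² ≤ 1/x² ≤ 1/m²`
on `[m, M]`, this applies to `f = -log` with `a = 1/M²` and to `f = log` with `a = -1/m²`.
-/

open Set

theorem strongConvexOn_of_hasDerivWithinAt2 {D : Set ℝ} (hD : Convex ℝ D) {f f' f'' : ℝ → ℝ}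
    {a : ℝ} (hf : ContinuousOn f D)
    (hf' : ∀ x ∈ interior D, HasDerivWithinAt f (f' x) (interior D) x)
    (hf'' : ∀ x ∈ interior D, HasDerivWithinAt f' (f'' x) (interior D) x)
    (ha : ∀ x ∈ interior D, a ≤ f'' x) : StrongConvexOn D a f := by
  simp_rw [strongConvexOn_iff_convex, Real.norm_eq_abs, sq_abs]
  have hsq : ∀ x, HasDerivAt (fun x : ℝ => a / 2 * x ^ 2) (a * x) x := fun x =>
    ((hasDerivAt_pow 2 x).const_mul (a / 2)).congr_deriv (by push_cast; ring)
  refine convexOn_of_hasDerivWithinAt2_nonneg hD (f' := fun x => f' x - a * x)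
    (f'' := fun x => f'' x - a) (hf.sub (by fun_prop)) (fun x hx => ?_) (fun x hx => ?_)
    (fun x hx => sub_nonneg.2 (ha x hx))
  · exact (hf' x hx).fun_sub (hsq x).hasDerivWithinAt
  · simpa using (hf'' x hx).fun_sub ((hasDerivAt_id x).const_mul a).hasDerivWithinAt

theorem StrongConvexOn.map_integral_add_le {Ω : Type*} [MeasurableSpace Ω] {μ : Measure Ω}
    [IsProbabilityMeasure μ] {s : Set ℝ} {f : ℝ → ℝ} {a : ℝ} {X : Ω → ℝ}
    (hf : StrongConvexOn s a f) (hfc : ContinuousOn f s) (hs : IsClosed s)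
    (hX : ∀ᵐ ω ∂μ, X ω ∈ s) (hXi : Integrable X μ) (hX2i : Integrable (fun ω => X ω ^ 2) μ)
    (hfXi : Integrable (fun ω => f (X ω)) μ) :
    f (∫ ω, X ω ∂μ) + a / 2 * ((∫ ω, X ω ^ 2 ∂μ) - (∫ ω, X ω ∂μ) ^ 2) ≤ ∫ ω, f (X ω) ∂μ := by
  rw [strongConvexOn_iff_convex] at hf
  simp_rw [Real.norm_eq_abs, sq_abs] at hf
  have jensen := hf.map_integral_le (hfc.sub (by fun_prop)) hs hX hXi
    (hfXi.sub (hX2i.const_mul (a / 2)))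
  rw [integral_sub hfXi (hX2i.const_mul _), integral_const_mul] at jensen
  linarith

theorem continuousOn_log_Icc {m : ℝ} (hm : 0 < m) (M : ℝ) : ContinuousOn log (Icc m M) :=
  continuousOn_log.mono fun _ hx => (hm.trans_le hx.1).ne'

theorem strongConvexOn_log_Icc {m : ℝ} (hm : 0 < m) (M : ℝ) :
    StrongConvexOn (Icc m M) (-(m ^ 2)⁻¹) log := by
  refine strongConvexOn_of_hasDerivWithinAt2 (convex_Icc m M) (f' := fun x => x⁻¹)
    (f'' := fun x => -(x ^ 2)⁻¹) (continuousOn_log_Icc hm M) ?_ ?_ ?_ <;>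
    rw [interior_Icc] <;> intro x hx
  · exact (hasDerivAt_log (hm.trans hx.1).ne').hasDerivWithinAt
  · exact (hasDerivAt_inv (hm.trans hx.1).ne').hasDerivWithinAt
  · exact neg_le_neg (inv_anti₀ (by positivity) (pow_le_pow_left₀ hm.le hx.1.le 2))

theorem strongConvexOn_neg_log_Icc {m : ℝ} (hm : 0 < m) (M : ℝ) :
    StrongConvexOn (Icc m M) (M ^ 2)⁻¹ (fun x => -log x) := by
  refine strongConvexOn_of_hasDerivWithinAt2 (convex_Icc m M) (f' := fun x => -x⁻¹)
    (f'' := fun x => (x ^ 2)⁻¹) (continuousOn_log_Icc hm M).neg ?_ ?_ ?_ <;>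
    rw [interior_Icc] <;> intro x hx
  · exact (hasDerivAt_log (hm.trans hx.1).ne').neg.hasDerivWithinAt
  · simpa using (hasDerivAt_inv (hm.trans hx.1).ne').fun_neg.hasDerivWithinAt
  · have hx0 : 0 < x := hm.trans hx.1
    exact inv_anti₀ (by positivity) (pow_le_pow_left₀ hx0.le hx.2.le 2)

theorem stmt_19_general {Ω : Type*} [MeasurableSpace Ω] (P : Measure Ω) [IsProbabilityMeasure P]
    (X : Ω → ℝ) (m M : ℝ) (hm : 0 < m)
    (hX : ∀ᵐ ω ∂P, X ω ∈ Set.Icc m M)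
    (hXint : Integrable X P)
    (hX2int : Integrable (fun ω => (X ω) ^ 2) P)
    (hlogint : Integrable (fun ω => Real.log (X ω)) P) :
    1 / (2 * m ^ 2) * ((∫ ω, (X ω) ^ 2 ∂P) - (∫ ω, X ω ∂P) ^ 2) ≥
      Real.log (∫ ω, X ω ∂P) - (∫ ω, Real.log (X ω) ∂P) ∧
    Real.log (∫ ω, X ω ∂P) - (∫ ω, Real.log (X ω) ∂P) ≥
      1 / (2 * M ^ 2) * ((∫ ω, (X ω) ^ 2 ∂P) - (∫ ω, X ω ∂P) ^ 2) := by
  have hlog := continuousOn_log_Icc hm M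
  have upper := (strongConvexOn_log_Icc hm M).map_integral_add_le hlog isClosed_Icc hX hXint
    hX2int hlogint
  have lower := (strongConvexOn_neg_log_Icc hm M).map_integral_add_le hlog.neg isClosed_Icc hX
    hXint hX2int hlogint.neg
  rw [integral_neg] at lower
  constructor
  · linear_combination upper
  · linear_combination lower

theorem stmt_19 {Ω : Type*} [MeasurableSpace Ω] (P : Measure Ω) [IsProbabilityMeasure P]
    (X : Ω → ℝ) (m M : ℝ) (hm : 0 < m) (hmM : m < M)
    (hX : ∀ᵐ ω ∂P, X ω ∈ Set.Icc m M)
    (hXint : Integrable X P)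
    (hX2int : Integrable (fun ω => (X ω) ^ 2) P)
    (hlogint : Integrable (fun ω => Real.log (X ω)) P) :
    1 / (2 * m ^ 2) * ((∫ ω, (X ω) ^ 2 ∂P) - (∫ ω, X ω ∂P) ^ 2) ≥
      Real.log (∫ ω, X ω ∂P) - (∫ ω, Real.log (X ω) ∂P) ∧
    Real.log (∫ ω, X ω ∂P) - (∫ ω, Real.log (X ω) ∂P) ≥
      1 / (2 * M ^ 2) * ((∫ ω, (X ω) ^ 2 ∂P) - (∫ ω, X ω ∂P) ^ 2) :=
  stmt_19_general P X m M hm hX hXint hX2int hlogint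
end
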